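/- arXiv:math-ph/0309016 — 6 statements merged into one kernel-verified Lean document; each statement's English description precedes it below -/
import Mathlib

section
/- Let B ≥ 0, U ≥ 1, P ≥ 0, p > 1, and suppose P U^p a^{p−1} > B where a := ‖f₀‖ > 0. Then the maximal solution of R' = U P R^p − B R, R(0) = U a, exists exactly on [0, t_N) with t_N = (1/(p−1)) L_B(P U^p a^{p−1}), where L_B(u) = −(1/B) log(1 − B/u) for 0 < B < u and L_0(u) = 1/u; R is increasing on [0, t_N) and R(t) → +∞ as t → t_N⁻. -/
/-!
The substitution `y = R ^ (1 - p)` turns the Bernoulli equation `R' = U P R ^ p - B R` into the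
affine equation `y' = (p - 1) (B y - U P)`. Its explicit solution is strictly decreasing (because
`B y(0) < U P` is exactly the hypothesis on the data) and vanishes at `t_N`, so
`R = y ^ (1 / (1 - p))` is increasing on `[0, t_N)` and blows up at `t_N`. Conversely, any solution
on `[0, θ)` with `θ > t_N` stays positive on `[0, t_N]`, since `R' ≥ -B R` while `R > 0`; hence its
`R ^ (1 - p)` solves the same affine equation, coincides with `y` by uniqueness, and would vanish at
`t_N`.
-/

open Real Filter Set

noncomputable section

/-- `L_B(u) = −(1/B) log(1 − B/u)` for `0 < B < u`, and `L_0(u) = 1/u`. -/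
def LB (B u : ℝ) : ℝ := if B = 0 then 1 / u else -(1 / B) * Real.log (1 - B / u)

open Topology

lemma LB_mul_mul {q : ℝ} (hq : q ≠ 0) (B u : ℝ) : LB (q * B) (q * u) = 1 / q * LB B u := by
  by_cases hB : B = 0
  · simp [LB, hB, mul_comm]
  · simp only [LB, mul_eq_zero, hq, hB, or_self, if_false, mul_div_mul_left _ _ hq]
    field_simp

/-- The solution of `y' = k y - m`, `y 0 = y₀`. -/
def affineODESol (k m y₀ t : ℝ) : ℝ :=
  if k = 0 then y₀ - m * t else m / k + (y₀ - m / k) * exp (k * t)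

section affineODESol

variable {k m y₀ : ℝ}

@[simp]
lemma affineODESol_zero : affineODESol k m y₀ 0 = y₀ := by
  unfold affineODESol; split_ifs <;> simp

lemma affineODESol_sub_eq (t : ℝ) :
    k * affineODESol k m y₀ t - m = (k * y₀ - m) * exp (k * t) := by
  unfold affineODESol
  split_ifs with hk
  · simp [hk]
  · field_simp
    ring

lemma hasDerivAt_affineODESol (t : ℝ) :
    HasDerivAt (affineODESol k m y₀) (k * affineODESol k m y₀ t - m) t := by
  rw [affineODESol_sub_eq]
  unfold affineODESol
  split_ifs with hk
  · simpa [hk] using ((hasDerivAt_id t).const_mul m).const_sub y₀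
  · refine ((((hasDerivAt_id' t).const_mul k).exp.const_mul (y₀ - m / k)).const_add
      (m / k)).congr_deriv ?_
    field_simp

lemma strictAnti_affineODESol (h : k * y₀ < m) : StrictAnti (affineODESol k m y₀) :=
  strictAnti_of_deriv_neg fun t => by
    rw [(hasDerivAt_affineODESol t).deriv, affineODESol_sub_eq]
    exact mul_neg_of_neg_of_pos (by linarith) (exp_pos _)

lemma affineODESol_LB (hm : 0 < m) (h : k * y₀ < m) :
    affineODESol k m y₀ (LB k (m / y₀)) = 0 := by
  unfold affineODESol LB
  split_ifs with hk
  · field_simp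
    ring
  · have hlt : 0 < 1 - k / (m / y₀) := by
      rw [sub_pos, div_div_eq_mul_div, div_lt_one hm]
      linarith
    rw [show k * (-(1 / k) * log (1 - k / (m / y₀))) = -log (1 - k / (m / y₀)) by field_simp,
      exp_neg, exp_log hlt]
    have : m - k * y₀ ≠ 0 := by linarith
    field_simp
    ring

lemma eqOn_affineODESol {f : ℝ → ℝ} {T : ℝ} (hf0 : f 0 = y₀)
    (hf : ∀ t ∈ Icc 0 T, HasDerivAt f (k * f t - m) t) :
    EqOn f (affineODESol k m y₀) (Icc 0 T) := by
  have hlip : LipschitzWith ‖k‖₊ (fun x : ℝ => k * x - m) :=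
    LipschitzWith.of_dist_le_mul fun x y => by
      rw [Real.dist_eq, Real.dist_eq, coe_nnnorm, Real.norm_eq_abs, ← abs_mul]
      ring_nf
      rfl
  exact ODE_solution_unique_of_mem_Icc_right (v := fun _ x => k * x - m) (s := fun _ => univ)
    (fun _ _ => hlip.lipschitzOnWith)
    (fun t ht => (hf t ht).continuousAt.continuousWithinAt)
    (fun t ht => (hf t (Ico_subset_Icc_self ht)).hasDerivWithinAt) (fun _ _ => trivial)
    (fun t _ => (hasDerivAt_affineODESol t).continuousAt.continuousWithinAt)
    (fun t _ => (hasDerivAt_affineODESol t).hasDerivWithinAt) (fun _ _ => trivial)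
    (by rw [hf0, affineODESol_zero])

end affineODESol

section Bernoulli

variable {S : ℝ → ℝ} {a b p t : ℝ}

lemma HasDerivAt.rpow_one_sub_of_bernoulli (hS : HasDerivAt S (a * S t ^ p - b * S t) t)
    (hpos : 0 < S t) :
    HasDerivAt (fun s => S s ^ (1 - p))
      ((p - 1) * b * S t ^ (1 - p) - (p - 1) * a) t := by
  convert hS.rpow_const (p := 1 - p) (Or.inl hpos.ne') using 1
  have h1 : S t ^ p * S t ^ (1 - p - 1) = 1 := by
    rw [← rpow_add hpos, show p + (1 - p - 1) = 0 by ring, rpow_zero]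
  have h2 : S t ^ (1 - p - 1) * S t = S t ^ (1 - p) := by
    rw [← rpow_add_one hpos.ne']
    ring_nf
  linear_combination -(1 - p) * a * h1 + (1 - p) * b * h2

lemma HasDerivAt.rpow_inv_one_sub_of_affine (hp : p ≠ 1)
    (hS : HasDerivAt S ((p - 1) * b * S t - (p - 1) * a) t) (hpos : 0 < S t) :
    HasDerivAt (fun s => S s ^ (1 - p)⁻¹)
      (a * (S t ^ (1 - p)⁻¹) ^ p - b * S t ^ (1 - p)⁻¹) t := by
  set e := (1 - p)⁻¹
  have hep : e * (1 - p) = 1 := inv_mul_cancel₀ (sub_ne_zero.2 hp.symm)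
  convert hS.rpow_const (p := e) (Or.inl hpos.ne') using 1
  have h1 : (S t ^ e) ^ p = S t ^ (e - 1) := by
    rw [← rpow_mul hpos.le]
    congr 1
    linear_combination -hep
  have h2 : S t ^ e = S t ^ (e - 1) * S t := by
    rw [← rpow_add_one hpos.ne']
    ring_nf
  rw [h1, h2]
  linear_combination (b * S t - a) * S t ^ (e - 1) * hep

end Bernoulli

lemma pos_of_neg_mul_le_deriv {S S' : ℝ → ℝ} {b T : ℝ} (h0 : 0 < S 0)
    (hS : ∀ t ∈ Icc 0 T, HasDerivAt S (S' t) t)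
    (hS' : ∀ t ∈ Ico 0 T, 0 < S t → -b * S t ≤ S' t) :
    ∀ t ∈ Icc 0 T, 0 < S t := by
  -- `S` cannot cross the faster-decaying barrier `S 0 * exp (-(b + 1) t)` from above.
  have hbarrier (t : ℝ) : HasDerivAt (fun s => S 0 * exp (-(b + 1) * s))
      (-(b + 1) * (S 0 * exp (-(b + 1) * t))) t :=
    (((hasDerivAt_id' t).const_mul _).exp.const_mul (S 0)).congr_deriv (by ring)
  have hlower := image_le_of_deriv_right_lt_deriv_boundary'
    (fun t _ => (hbarrier t).continuousAt.continuousWithinAt)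
    (fun t _ => (hbarrier t).hasDerivWithinAt) (by simp)
    (fun t ht => (hS t ht).continuousAt.continuousWithinAt)
    (fun t ht => (hS t (Ico_subset_Icc_self ht)).hasDerivWithinAt)
    (fun t ht heq => by
      have hSt : 0 < S t := heq ▸ mul_pos h0 (exp_pos _)
      rw [heq]
      linarith [hS' t ht hSt])
  exact fun t ht => (mul_pos h0 (exp_pos _)).trans_le (hlower ht)

/-- The zero of the affine solution that `R ^ (1 - p)` follows when `R' = a R ^ p - b R`,
`R 0 = R₀`. -/
def bernoulliBlowupTime (a b p R₀ : ℝ) : ℝ := LB ((p - 1) * b) ((p - 1) * a / R₀ ^ (1 - p))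

section Blowup

variable {a b p R₀ : ℝ}

lemma strictAnti_affineODESol_bernoulli (hp : 1 < p) (hb : b * R₀ ^ (1 - p) < a) :
    StrictAnti (affineODESol ((p - 1) * b) ((p - 1) * a) (R₀ ^ (1 - p))) :=
  strictAnti_affineODESol (by rw [mul_assoc]; exact mul_lt_mul_of_pos_left hb (by linarith))

lemma affineODESol_bernoulliBlowupTime (ha : 0 < a) (hp : 1 < p)
    (hb : b * R₀ ^ (1 - p) < a) :
    affineODESol ((p - 1) * b) ((p - 1) * a) (R₀ ^ (1 - p)) (bernoulliBlowupTime a b p R₀) = 0 :=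
  affineODESol_LB (by nlinarith)
    (by rw [mul_assoc]; exact mul_lt_mul_of_pos_left hb (by linarith))

theorem exists_bernoulli_blowup (ha : 0 < a) (hp : 1 < p) (hR₀ : 0 < R₀)
    (hb : b * R₀ ^ (1 - p) < a) :
    ∃ R : ℝ → ℝ, R 0 = R₀ ∧
      (∀ t ∈ Ico 0 (bernoulliBlowupTime a b p R₀), HasDerivAt R (a * R t ^ p - b * R t) t) ∧
      StrictMonoOn R (Ico 0 (bernoulliBlowupTime a b p R₀)) ∧
      Tendsto R (𝓝[<] bernoulliBlowupTime a b p R₀) atTop := by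
  set T := bernoulliBlowupTime a b p R₀
  set y := affineODESol ((p - 1) * b) ((p - 1) * a) (R₀ ^ (1 - p))
  have hroot : y T = 0 := affineODESol_bernoulliBlowupTime ha hp hb
  have hpos (t : ℝ) (ht : t < T) : 0 < y t :=
    hroot ▸ strictAnti_affineODESol_bernoulli hp hb ht
  have he : (1 - p)⁻¹ < 0 := inv_lt_zero.2 (by linarith)
  have hy : Tendsto y (𝓝[<] T) (𝓝[>] 0) := tendsto_nhdsWithin_iff.2
    ⟨hroot ▸ (hasDerivAt_affineODESol T).continuousAt.tendsto.mono_left nhdsWithin_le_nhds,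
      eventually_nhdsWithin_of_forall hpos⟩
  refine ⟨fun t => y t ^ (1 - p)⁻¹, ?_, fun t ht => ?_, fun s hs t ht hst => ?_,
    (tendsto_rpow_neg_nhdsGT_zero he).comp hy⟩
  · simp [y, rpow_rpow_inv hR₀.le (by linarith : 1 - p ≠ 0)]
  · exact (hasDerivAt_affineODESol t).rpow_inv_one_sub_of_affine hp.ne' (hpos t ht.2)
  · exact rpow_lt_rpow_of_neg (hpos t ht.2)
      (strictAnti_affineODESol_bernoulli hp hb hst) he

theorem le_bernoulliBlowupTime (ha : 0 < a) (hp : 1 < p) (hR₀ : 0 < R₀)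
    (hb : b * R₀ ^ (1 - p) < a) {S : ℝ → ℝ} {θ : ℝ} (hS0 : S 0 = R₀)
    (hS : ∀ t ∈ Ico 0 θ, HasDerivAt S (a * S t ^ p - b * S t) t) :
    θ ≤ bernoulliBlowupTime a b p R₀ := by
  by_contra! hθ
  set T := bernoulliBlowupTime a b p R₀
  have hroot := affineODESol_bernoulliBlowupTime ha hp hb
  have hT : 0 ≤ T := by
    refine ((strictAnti_affineODESol_bernoulli hp hb).lt_iff_gt.1 ?_).le
    rw [hroot, affineODESol_zero]
    exact rpow_pos_of_pos hR₀ _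
  have hS' (t : ℝ) (ht : t ∈ Icc 0 T) : HasDerivAt S (a * S t ^ p - b * S t) t :=
    hS t ⟨ht.1, ht.2.trans_lt hθ⟩
  have hSpos := pos_of_neg_mul_le_deriv (b := b) (hS0 ▸ hR₀) hS'
    (fun t _ hSt => by nlinarith [rpow_nonneg hSt.le p])
  have hlin := eqOn_affineODESol (by rw [hS0])
    (fun t ht => (hS' t ht).rpow_one_sub_of_bernoulli (hSpos t ht)) ⟨hT, le_rfl⟩
  exact (rpow_pos_of_pos (hSpos T ⟨hT, le_rfl⟩) _).ne' (hlin.trans hroot)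

end Blowup

theorem stmt_8_general (B U P p a : ℝ) (hB : 0 ≤ B) (hU : 1 ≤ U)
    (hp : 1 < p) (ha : 0 < a)
    (hsup : B < P * U ^ p * a ^ (p - 1)) :
    ∃ R : ℝ → ℝ,
      let tN : ℝ := (1 / (p - 1)) * LB B (P * U ^ p * a ^ (p - 1))
      R 0 = U * a ∧
      (∀ t ∈ Ico (0 : ℝ) tN, HasDerivAt R (U * P * R t ^ p - B * R t) t) ∧
      StrictMonoOn R (Ico (0 : ℝ) tN) ∧
      Tendsto R (nhdsWithin tN (Iio tN)) atTop ∧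
      -- maximality: no solution exists beyond `t_N`
      (∀ θ : ℝ, ∀ R' : ℝ → ℝ, R' 0 = U * a →
        (∀ t ∈ Ico (0 : ℝ) θ, HasDerivAt R' (U * P * R' t ^ p - B * R' t) t) →
        θ ≤ tN) := by
  have hU0 : 0 < U := by linarith
  have hUa : 0 < U * a := mul_pos hU0 ha
  set c := P * U ^ p * a ^ (p - 1)
  have hUP : U * P = c * (U * a) ^ (1 - p) := by
    have hU1 : U ^ p * U ^ (1 - p) = U := by rw [← rpow_add hU0]; simp
    have ha1 : a ^ (p - 1) * a ^ (1 - p) = 1 := by rw [← rpow_add ha]; simp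
    rw [mul_rpow hU0.le ha.le]
    linear_combination (-P * (a ^ (p - 1) * a ^ (1 - p))) * hU1 - P * U * ha1
  have hb : B * (U * a) ^ (1 - p) < U * P :=
    hUP ▸ mul_lt_mul_of_pos_right hsup (rpow_pos_of_pos hUa _)
  have hUP0 : 0 < U * P := lt_of_le_of_lt (by positivity) hb
  have hT : bernoulliBlowupTime (U * P) B p (U * a) = 1 / (p - 1) * LB B c := by
    rw [bernoulliBlowupTime, hUP, mul_div_assoc,
      mul_div_cancel_right₀ _ (rpow_pos_of_pos hUa _).ne', LB_mul_mul (by linarith)]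
  obtain ⟨R, hR0, hR', hmono, htends⟩ := exists_bernoulli_blowup hUP0 hp hUa hb
  rw [hT] at hR' hmono htends
  exact ⟨R, hR0, hR', hmono, htends,
    fun θ S hS0 hS => hT ▸ le_bernoulliBlowupTime hUP0 hp hUa hb hS0 hS⟩

/-- If `P U^p a^{p−1} > B` (with `a = ‖f₀‖ > 0`), the maximal solution of
`R' = U P R^p − B R`, `R(0) = U a`, exists exactly on `[0, t_N)` with
`t_N = (1/(p−1)) L_B(P U^p a^{p−1})`; it is increasing and blows up at `t_N`. -/
theorem stmt_8 (B U P p a : ℝ) (hB : 0 ≤ B) (hU : 1 ≤ U) (hP : 0 ≤ P)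
    (hp : 1 < p) (ha : 0 < a)
    (hsup : B < P * U ^ p * a ^ (p - 1)) :
    ∃ R : ℝ → ℝ,
      let tN : ℝ := (1 / (p - 1)) * LB B (P * U ^ p * a ^ (p - 1))
      R 0 = U * a ∧
      (∀ t ∈ Ico (0 : ℝ) tN, HasDerivAt R (U * P * R t ^ p - B * R t) t) ∧
      StrictMonoOn R (Ico (0 : ℝ) tN) ∧
      Tendsto R (nhdsWithin tN (Iio tN)) atTop ∧
      -- maximality: no solution exists beyond `t_N`
      (∀ θ : ℝ, ∀ R' : ℝ → ℝ, R' 0 = U * a →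
        (∀ t ∈ Ico (0 : ℝ) θ, HasDerivAt R' (U * P * R' t ^ p - B * R' t) t) →
        θ ≤ tN) :=
  stmt_8_general B U P p a hB hU hp ha hsup

end
end

section
/- Let F be a Banach space, 𝒰 a strongly continuous linear semigroup on F with estimator u (i.e. ‖𝒰(t)f‖ ≤ u(t)‖f‖, u continuous), and P : Dom P ⊆ F × ℝ → F continuous and Lipschitz at fixed time on strict subsets of its open domain. If φ : [t₀,t₁] → F and φ' : [t₀,t₁'] → F both satisfy the Volterra equation ψ(t) = 𝒰(t−t₀)f₀ + ∫_{t₀}^t 𝒰(t−s)P(ψ(s),s) ds with graphs contained in Dom P, then φ(t) = φ'(t) for all t in the intersection of their domains. -/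
/-!
Along the two solutions the nonlinearity is Lipschitz with a single constant `L`, because the
union of their graphs over `[t₀, t]` is compact and contained in `Dom P`; and the estimator is
bounded by some `M` on `[0, t - t₀]`. Subtracting the two Volterra equations then gives
`‖φ r - φ' r‖ ≤ M L ∫_{t₀}^r ‖φ s - φ' s‖ ds`, and Grönwall's inequality forces `φ = φ'`.
-/

open MeasureTheory Set Bornology Filter Topology

section StrongContinuity

variable {X 𝕜 E F : Type*} [TopologicalSpace X] [NontriviallyNormedField 𝕜]
  [NormedAddCommGroup E] [NormedSpace 𝕜 E] [NormedAddCommGroup F] [NormedSpace 𝕜 F]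
  {A : X → E →L[𝕜] F} {g : X → ℝ} {v : X → E} {s : Set X}

theorem ContinuousWithinAt.clm_apply_of_norm_apply_le {x₀ : X}
    (hA : ContinuousWithinAt (fun x => A x (v x₀)) s x₀) (hg : ContinuousWithinAt g s x₀)
    (hAg : ∀ x ∈ s, ∀ f, ‖A x f‖ ≤ g x * ‖f‖) (hv : ContinuousWithinAt v s x₀) :
    ContinuousWithinAt (fun x => A x (v x)) s x₀ := by
  have hdom : Tendsto (fun x => g x * ‖v x - v x₀‖) (𝓝[s] x₀) (𝓝 0) := by
    simpa using hg.tendsto.mul (hv.tendsto.sub_const (v x₀)).norm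
  have hsmall : Tendsto (fun x => A x (v x - v x₀)) (𝓝[s] x₀) (𝓝 0) := by
    refine squeeze_zero_norm' ?_ hdom
    filter_upwards [self_mem_nhdsWithin] with x hx using hAg x hx _
  simpa [ContinuousWithinAt] using hsmall.add hA.tendsto

theorem ContinuousOn.clm_apply_of_norm_apply_le (hA : ∀ f, ContinuousOn (fun x => A x f) s)
    (hg : ContinuousOn g s) (hAg : ∀ x ∈ s, ∀ f, ‖A x f‖ ≤ g x * ‖f‖) (hv : ContinuousOn v s) :
    ContinuousOn (fun x => A x (v x)) s := fun x hx =>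
  ContinuousWithinAt.clm_apply_of_norm_apply_le (hA _ x hx) (hg x hx) hAg (hv x hx)

end StrongContinuity

section Semigroup

variable {F : Type*} [NormedAddCommGroup F] [NormedSpace ℝ F] {𝒰 : ℝ → F →L[ℝ] F} {u : ℝ → ℝ}

theorem continuousOn_apply_sub_of_estimator
    (h𝒰c : ∀ f : F, ContinuousOn (fun t => 𝒰 t f) (Ici 0)) (hu_cont : ContinuousOn u (Ici 0))
    (hu : ∀ t : ℝ, 0 ≤ t → ∀ f : F, ‖𝒰 t f‖ ≤ u t * ‖f‖)
    {v : ℝ → F} {a t : ℝ} (hv : ContinuousOn v (Icc a t)) :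
    ContinuousOn (fun s => 𝒰 (t - s) (v s)) (Icc a t) := by
  have hmaps : MapsTo (fun s => t - s) (Icc a t) (Ici 0) := fun s hs => sub_nonneg.2 hs.2
  have hsub : ContinuousOn (fun s : ℝ => t - s) (Icc a t) := by fun_prop
  exact ContinuousOn.clm_apply_of_norm_apply_le (fun f => (h𝒰c f).comp hsub hmaps)
    (hu_cont.comp hsub hmaps) (fun s hs => hu _ (hmaps hs)) hv

theorem exists_norm_apply_le_of_estimator (hu_cont : ContinuousOn u (Ici 0))
    (hu : ∀ t : ℝ, 0 ≤ t → ∀ f : F, ‖𝒰 t f‖ ≤ u t * ‖f‖) {T : ℝ} (hT : 0 ≤ T) :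
    ∃ M, 0 ≤ M ∧ ∀ r ∈ Icc 0 T, ∀ f : F, ‖𝒰 r f‖ ≤ M * ‖f‖ := by
  obtain ⟨M, hM⟩ := isCompact_Icc.exists_bound_of_continuousOn (hu_cont.mono Icc_subset_Ici_self)
  refine ⟨M, (norm_nonneg _).trans (hM 0 ⟨le_rfl, hT⟩), fun r hr f => ?_⟩
  calc ‖𝒰 r f‖ ≤ u r * ‖f‖ := hu r hr.1 f
    _ ≤ M * ‖f‖ := by gcongr; exact (le_abs_self _).trans (hM r hr)

theorem norm_integral_sub_integral_le_mul
    (h𝒰c : ∀ f : F, ContinuousOn (fun t => 𝒰 t f) (Ici 0)) (hu_cont : ContinuousOn u (Ici 0))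
    (hu : ∀ t : ℝ, 0 ≤ t → ∀ f : F, ‖𝒰 t f‖ ≤ u t * ‖f‖)
    {v w : ℝ → F} {a t M : ℝ} (hat : a ≤ t)
    (hv : ContinuousOn v (Icc a t)) (hw : ContinuousOn w (Icc a t))
    (hM : ∀ r ∈ Icc 0 (t - a), ∀ f : F, ‖𝒰 r f‖ ≤ M * ‖f‖) :
    ‖(∫ s in a..t, 𝒰 (t - s) (v s)) - ∫ s in a..t, 𝒰 (t - s) (w s)‖ ≤
      M * ∫ s in a..t, ‖v s - w s‖ := by
  have hint : ∀ {z : ℝ → F}, ContinuousOn z (Icc a t) →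
      IntervalIntegrable (fun s => 𝒰 (t - s) (z s)) volume a t := fun hz =>
    (continuousOn_apply_sub_of_estimator h𝒰c hu_cont hu hz).intervalIntegrable_of_Icc hat
  rw [← intervalIntegral.integral_sub (hint hv) (hint hw), ← intervalIntegral.integral_const_mul]
  refine intervalIntegral.norm_integral_le_of_norm_le hat (ae_of_all _ fun s hs => ?_)
    (((hv.sub hw).norm.intervalIntegrable_of_Icc hat).const_mul M)
  rw [← map_sub]
  exact hM _ ⟨sub_nonneg.2 hs.2, by linarith [hs.1]⟩ _

end Semigroup

theorem exists_lipschitz_along_graphs {F : Type*} [NormedAddCommGroup F]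
    {P : F → ℝ → F} {D : Set (F × ℝ)}
    (hPlip : ∀ C : Set (F × ℝ), IsBounded C → closure C ⊆ D →
      ∃ L : ℝ, 0 ≤ L ∧ ∀ (f f' : F) (t : ℝ), (f, t) ∈ C → (f', t) ∈ C →
        ‖P f t - P f' t‖ ≤ L * ‖f - f'‖)
    {φ φ' : ℝ → F} {a b : ℝ} (hφ : ContinuousOn φ (Icc a b)) (hφ' : ContinuousOn φ' (Icc a b))
    (hφD : ∀ t ∈ Icc a b, (φ t, t) ∈ D) (hφ'D : ∀ t ∈ Icc a b, (φ' t, t) ∈ D) :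
    ∃ L, 0 ≤ L ∧ ∀ s ∈ Icc a b, ‖P (φ s) s - P (φ' s) s‖ ≤ L * ‖φ s - φ' s‖ := by
  set C := (fun s => (φ s, s)) '' Icc a b ∪ (fun s => (φ' s, s)) '' Icc a b
  have hC : IsCompact C := (isCompact_Icc.image_of_continuousOn (hφ.prodMk continuousOn_id)).union
    (isCompact_Icc.image_of_continuousOn (hφ'.prodMk continuousOn_id))
  have hCD : C ⊆ D := by
    rintro _ (⟨s, hs, rfl⟩ | ⟨s, hs, rfl⟩)
    exacts [hφD s hs, hφ'D s hs]
  obtain ⟨L, hL0, hL⟩ := hPlip C hC.isBounded (by rwa [hC.isClosed.closure_eq])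
  exact ⟨L, hL0, fun s hs => hL _ _ _ (.inl ⟨s, hs, rfl⟩) (.inr ⟨s, hs, rfl⟩)⟩

theorem eqOn_zero_of_le_mul_integral {g : ℝ → ℝ} {a b K : ℝ} (hg : ContinuousOn g (Icc a b))
    (hg0 : ∀ t ∈ Icc a b, 0 ≤ g t) (hgK : ∀ t ∈ Icc a b, g t ≤ K * ∫ s in a..t, g s) :
    EqOn g 0 (Icc a b) := by
  set G := fun t => ∫ s in a..t, g s
  have hG0 : ∀ t ∈ Icc a b, 0 ≤ G t := fun t ht =>
    intervalIntegral.integral_nonneg ht.1 fun s hs => hg0 s ⟨hs.1, hs.2.trans ht.2⟩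
  have hGc : ContinuousOn G (Icc a b) :=
    (intervalIntegral.continuousOn_primitive hg.integrableOn_Icc).congr
      fun x hx => intervalIntegral.integral_of_le hx.1
  have hG' : ∀ x ∈ Ico a b, HasDerivWithinAt G (g x) (Ici x) x := by
    intro x hx
    have hmem : Icc a b ∈ 𝓝[>] x := ordConnected_Icc.mem_nhdsGT (Ico_subset_Icc_self hx)
      (right_mem_Icc.2 (hx.1.trans hx.2.le)) hx.2
    exact intervalIntegral.integral_hasDerivWithinAt_right
      ((hg.mono (Icc_subset_Icc_right hx.2.le)).intervalIntegrable_of_Icc hx.1)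
      ((hg.stronglyMeasurableAtFilter_nhdsWithin measurableSet_Icc x).filter_mono
        (nhdsWithin_le_of_mem hmem))
      ((hg x (Ico_subset_Icc_self hx)).mono_of_mem_nhdsWithin hmem)
  have hG : ∀ t ∈ Icc a b, G t = 0 :=
    eq_zero_of_abs_deriv_le_mul_abs_self_of_eq_zero_right (K := |K|) hGc hG' (by simp [G])
      fun x hx => by
        have hx' := Ico_subset_Icc_self hx
        rw [Real.norm_of_nonneg (hg0 x hx'), Real.norm_of_nonneg (hG0 x hx')]
        exact (hgK x hx').trans (mul_le_mul_of_nonneg_right (le_abs_self K) (hG0 x hx'))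
  intro t ht
  have : g t ≤ K * G t := hgK t ht
  exact le_antisymm (by rwa [hG t ht, mul_zero] at this) (hg0 t ht)

theorem stmt_9_general
    {F : Type*} [NormedAddCommGroup F] [NormedSpace ℝ F]
    (𝒰 : ℝ → F →L[ℝ] F)
    (h𝒰c : ∀ f : F, ContinuousOn (fun t => 𝒰 t f) (Ici (0 : ℝ)))
    (u : ℝ → ℝ) (hu_cont : ContinuousOn u (Ici (0 : ℝ)))
    (hu : ∀ t : ℝ, 0 ≤ t → ∀ f : F, ‖𝒰 t f‖ ≤ u t * ‖f‖)
    (P : F → ℝ → F) (D : Set (F × ℝ))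
    (hPc : ContinuousOn (fun q : F × ℝ => P q.1 q.2) D)
    (hPlip : ∀ C : Set (F × ℝ), IsBounded C → closure C ⊆ D →
      ∃ L : ℝ, 0 ≤ L ∧ ∀ (f f' : F) (t : ℝ), (f, t) ∈ C → (f', t) ∈ C →
        ‖P f t - P f' t‖ ≤ L * ‖f - f'‖)
    (f₀ : F) (t₀ t₁ t₁' : ℝ)
    (φ φ' : ℝ → F)
    (hφc : ContinuousOn φ (Icc t₀ t₁)) (hφ'c : ContinuousOn φ' (Icc t₀ t₁'))
    (hφD : ∀ t ∈ Icc t₀ t₁, (φ t, t) ∈ D)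
    (hφ'D : ∀ t ∈ Icc t₀ t₁', (φ' t, t) ∈ D)
    (hφ : ∀ t ∈ Icc t₀ t₁,
      φ t = 𝒰 (t - t₀) f₀ + ∫ s in t₀..t, 𝒰 (t - s) (P (φ s) s))
    (hφ' : ∀ t ∈ Icc t₀ t₁',
      φ' t = 𝒰 (t - t₀) f₀ + ∫ s in t₀..t, 𝒰 (t - s) (P (φ' s) s)) :
    ∀ t ∈ Icc t₀ t₁ ∩ Icc t₀ t₁', φ t = φ' t := by
  rintro t ⟨⟨ht₀, ht₁⟩, -, ht₁'⟩
  have h₁ : Icc t₀ t ⊆ Icc t₀ t₁ := Icc_subset_Icc_right ht₁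
  have h₁' : Icc t₀ t ⊆ Icc t₀ t₁' := Icc_subset_Icc_right ht₁'
  have hPφ : ContinuousOn (fun s => P (φ s) s) (Icc t₀ t) :=
    hPc.comp ((hφc.mono h₁).prodMk continuousOn_id) fun s hs => hφD s (h₁ hs)
  have hPφ' : ContinuousOn (fun s => P (φ' s) s) (Icc t₀ t) :=
    hPc.comp ((hφ'c.mono h₁').prodMk continuousOn_id) fun s hs => hφ'D s (h₁' hs)
  obtain ⟨L, hL0, hL⟩ := exists_lipschitz_along_graphs hPlip (hφc.mono h₁) (hφ'c.mono h₁')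
    (fun s hs => hφD s (h₁ hs)) (fun s hs => hφ'D s (h₁' hs))
  obtain ⟨M, hM0, hM⟩ := exists_norm_apply_le_of_estimator hu_cont hu (sub_nonneg.2 ht₀)
  have hdiff : ContinuousOn (fun s => ‖φ s - φ' s‖) (Icc t₀ t) :=
    ((hφc.mono h₁).sub (hφ'c.mono h₁')).norm
  have key : ∀ r ∈ Icc t₀ t, ‖φ r - φ' r‖ ≤ M * L * ∫ s in t₀..r, ‖φ s - φ' s‖ := by
    intro r hr
    have hrt : Icc t₀ r ⊆ Icc t₀ t := Icc_subset_Icc_right hr.2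
    rw [hφ r (h₁ hr), hφ' r (h₁' hr), add_sub_add_left_eq_sub, mul_assoc,
      ← intervalIntegral.integral_const_mul]
    refine (norm_integral_sub_integral_le_mul h𝒰c hu_cont hu hr.1 (hPφ.mono hrt) (hPφ'.mono hrt)
      fun ρ hρ => hM ρ ⟨hρ.1, hρ.2.trans (by linarith [hr.2])⟩).trans ?_
    gcongr
    exact intervalIntegral.integral_mono_on hr.1
      ((hPφ.sub hPφ').norm.mono hrt |>.intervalIntegrable_of_Icc hr.1)
      ((hdiff.mono hrt).const_smul L |>.intervalIntegrable_of_Icc hr.1)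
      fun s hs => hL s (hrt hs)
  have := eqOn_zero_of_le_mul_integral hdiff (fun _ _ => norm_nonneg _) key ⟨ht₀, le_rfl⟩
  exact sub_eq_zero.1 (norm_eq_zero.1 this)

/-- Uniqueness for the Volterra equation `ψ(t) = 𝒰(t−t₀)f₀ + ∫_{t₀}^t 𝒰(t−s)P(ψ(s),s) ds`,
for a strongly continuous semigroup `𝒰` with estimator `u` and a nonlinearity `P` that is
continuous and Lipschitz at fixed time on the strict subsets of its open domain. -/
theorem stmt_9
    {F : Type*} [NormedAddCommGroup F] [NormedSpace ℝ F] [CompleteSpace F]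
    (𝒰 : ℝ → F →L[ℝ] F)
    (h𝒰sg : ∀ s t : ℝ, 0 ≤ s → 0 ≤ t → 𝒰 (s + t) = (𝒰 s).comp (𝒰 t))
    (h𝒰0 : 𝒰 0 = ContinuousLinearMap.id ℝ F)
    (h𝒰c : ∀ f : F, ContinuousOn (fun t => 𝒰 t f) (Ici (0 : ℝ)))
    (u : ℝ → ℝ) (hu_cont : ContinuousOn u (Ici (0 : ℝ)))
    (hu : ∀ t : ℝ, 0 ≤ t → ∀ f : F, ‖𝒰 t f‖ ≤ u t * ‖f‖)
    (P : F → ℝ → F) (D : Set (F × ℝ)) (hD : IsOpen D)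
    (hPc : ContinuousOn (fun q : F × ℝ => P q.1 q.2) D)
    (hPlip : ∀ C : Set (F × ℝ), IsBounded C → closure C ⊆ D →
      ∃ L : ℝ, 0 ≤ L ∧ ∀ (f f' : F) (t : ℝ), (f, t) ∈ C → (f', t) ∈ C →
        ‖P f t - P f' t‖ ≤ L * ‖f - f'‖)
    (f₀ : F) (t₀ t₁ t₁' : ℝ) (h01 : t₀ < t₁) (h01' : t₀ < t₁')
    (φ φ' : ℝ → F)
    (hφc : ContinuousOn φ (Icc t₀ t₁)) (hφ'c : ContinuousOn φ' (Icc t₀ t₁'))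
    (hφD : ∀ t ∈ Icc t₀ t₁, (φ t, t) ∈ D)
    (hφ'D : ∀ t ∈ Icc t₀ t₁', (φ' t, t) ∈ D)
    (hφ : ∀ t ∈ Icc t₀ t₁,
      φ t = 𝒰 (t - t₀) f₀ + ∫ s in t₀..t, 𝒰 (t - s) (P (φ s) s))
    (hφ' : ∀ t ∈ Icc t₀ t₁',
      φ' t = 𝒰 (t - t₀) f₀ + ∫ s in t₀..t, 𝒰 (t - s) (P (φ' s) s)) :
    ∀ t ∈ Icc t₀ t₁ ∩ Icc t₀ t₁', φ t = φ' t :=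
  stmt_9_general 𝒰 h𝒰c u hu_cont hu P D hPc hPlip f₀ t₀ t₁ t₁' φ φ' hφc hφ'c hφD hφ'D hφ hφ'
end

section
/- Let F be a Banach space, 𝒰 a strongly continuous linear semigroup on F with continuous estimator u, P : Dom P ⊆ F × ℝ → F continuous and Lipschitz at fixed time on strict subsets of its open domain, and (f₀,t₀) ∈ Dom P. Let φ_ap ∈ C([t₀,t₁], F) with graph in Dom P, let ℰ : [t₀,t₁] → [0,∞) be continuous with ‖φ_ap(t) − 𝒰(t−t₀)f₀ − ∫_{t₀}^t 𝒰(t−s)P(φ_ap(s),s) ds‖ ≤ ℰ(t), and let ℓ : [0,ρ) × [t₀,t₁] → [0,∞) be continuous, nondecreasing in its first argument, with the tube {(f,t) : ‖f − φ_ap(t)‖ < ρ} contained in Dom P and ‖P(f,t) − P(φ_ap(t),t)‖ ≤ ℓ(‖f − φ_ap(t)‖, t) on the tube. If R ∈ C([t₀,t₁], [0,ρ)) satisfies the control inequality ℰ(t) + ∫_{t₀}^t u(t−s) ℓ(R(s), s) ds ≤ R(t) for all t ∈ [t₀,t₁], then the Volterra problem φ(t) = 𝒰(t−t₀)f₀ +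 ∫_{t₀}^t 𝒰(t−s)P(φ(s),s) ds has a solution φ ∈ C([t₀,t₁], F) with ‖φ(t) − φ_ap(t)‖ ≤ R(t) for all t ∈ [t₀,t₁]. -/
open MeasureTheory Set Bornology Filter Topology Function
open scoped ENNReal

/-!
The solution is a fixed point of the Duhamel map
`φ ↦ 𝒰 (· - t₀) f₀ + ∫ s in t₀..·, 𝒰 (· - s) (P (φ s) s)` on the closed set of continuous `φ`
with `‖φ t - φap t‖ ≤ R t`. This set is invariant: compare with `φap`, whose defect is at most
`ℰ`, and bound the difference of the integrals by `∫ u (t - s) * ℓ (R s) s` using the monotonicity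
of `ℓ`; the control inequality closes the estimate. The graphs of its elements lie in a bounded
closed tube inside `D`, on which `P` is Lipschitz with some constant `L`. With `M` a bound of `u`
on `[0, t₁ - t₀]`, the `n`-th iterate of the Duhamel map is `(M L (t₁ - t₀))ⁿ / n!`-Lipschitz for
the sup distance, as in Picard–Lindelöf, hence a contraction for large `n`.
-/

theorem nonneg_of_norm_le_mul_norm {E F : Type*} [NormedAddCommGroup E] [Nontrivial E]
    [SeminormedAddCommGroup F] {g : E → F} {c : ℝ} (h : ∀ f, ‖g f‖ ≤ c * ‖f‖) : 0 ≤ c := by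
  obtain ⟨f, hf⟩ := exists_ne (0 : E)
  exact nonneg_of_mul_nonneg_left ((norm_nonneg _).trans (h f)) (norm_pos_iff.2 hf)

theorem ContinuousOn.clm_apply_of_norm_le {𝕜 X E F : Type*} [NormedField 𝕜] [TopologicalSpace X]
    [SeminormedAddCommGroup E] [SeminormedAddCommGroup F] [NormedSpace 𝕜 E] [NormedSpace 𝕜 F]
    {A : X → E →L[𝕜] F} {u : X → ℝ} {s : Set X} (hu : ContinuousOn u s)
    (hA : ∀ x ∈ s, ∀ f, ‖A x f‖ ≤ u x * ‖f‖) (hAc : ∀ f, ContinuousOn (fun x => A x f) s) :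
    ContinuousOn (fun p : X × E => A p.1 p.2) (s ×ˢ univ) := by
  rintro ⟨x, f⟩ ⟨hx, -⟩
  have hfst : Tendsto Prod.fst (𝓝[s ×ˢ univ] (x, f)) (𝓝[s] x) :=
    continuousWithinAt_fst.tendsto_nhdsWithin fun p hp => hp.1
  have hbound : Tendsto (fun p : X × E => u p.1 * dist p.2 f + dist (A p.1 f) (A x f))
      (𝓝[s ×ˢ univ] (x, f)) (𝓝 0) := by
    have hdist : Tendsto (fun p : X × E => dist p.2 f) (𝓝[s ×ˢ univ] (x, f)) (𝓝 (dist f f)) :=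
      ((continuous_snd.tendsto _).dist tendsto_const_nhds).mono_left nhdsWithin_le_nhds
    simpa using (((hu x hx).tendsto.comp hfst).mul hdist).add
      (((hAc f x hx).tendsto.comp hfst).dist (tendsto_const_nhds (x := A x f)))
  rw [ContinuousWithinAt, tendsto_iff_dist_tendsto_zero]
  refine squeeze_zero' (.of_forall fun _ => dist_nonneg) ?_ hbound
  filter_upwards [self_mem_nhdsWithin] with p hp
  calc dist (A p.1 p.2) (A x f) ≤ dist (A p.1 p.2) (A p.1 f) + dist (A p.1 f) (A x f) :=
        dist_triangle _ _ _
    _ ≤ u p.1 * dist p.2 f + dist (A p.1 f) (A x f) := by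
        gcongr
        rw [dist_eq_norm, dist_eq_norm, ← map_sub]
        exact hA _ hp.1 _

section VolterraFixedPoint

variable {E : Type*} [MetricSpace E] {a b : ℝ} (hab : a ≤ b) {S : Set C(Icc a b, E)}
  {T : S → S} {K : ℝ}

theorem dist_iterate_apply_le_of_dist_le_integral (hK : 0 ≤ K)
    (hT : ∀ ψ χ : S, ∀ t : Icc a b, dist ((T ψ).1 t) ((T χ).1 t) ≤
      K * ∫ s in a..t, dist (IccExtend hab ψ.1 s) (IccExtend hab χ.1 s))
    (n : ℕ) (ψ χ : S) (t : Icc a b) :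
    dist ((T^[n] ψ).1 t) ((T^[n] χ).1 t) ≤ (K * (t - a)) ^ n / n.factorial * dist ψ χ := by
  induction n generalizing t with
  | zero => simpa [Subtype.dist_eq] using ContinuousMap.dist_apply_le_dist t
  | succ n ih =>
    rw [iterate_succ_apply', iterate_succ_apply']
    have hint : ∫ s in a..t, K ^ n * (s - a) ^ n / n.factorial * dist ψ χ =
        K ^ n * (t - a) ^ (n + 1) / (n + 1).factorial * dist ψ χ := by
      simp only [mul_div_assoc, intervalIntegral.integral_const_mul, mul_comm _ (dist ψ χ),
        intervalIntegral.integral_div, intervalIntegral.integral_comp_sub_right (· ^ n), sub_self,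
        integral_pow, zero_pow n.succ_ne_zero, sub_zero]
      push_cast [Nat.factorial_succ]
      field_simp
    calc _ ≤ K * ∫ s in a..t, dist (IccExtend hab (T^[n] ψ).1 s) (IccExtend hab (T^[n] χ).1 s) :=
          hT _ _ t
      _ ≤ K * ∫ s in a..t, K ^ n * (s - a) ^ n / n.factorial * dist ψ χ := by
          gcongr
          refine intervalIntegral.integral_mono_on t.2.1
            (Continuous.intervalIntegrable (by fun_prop) _ _)
            (Continuous.intervalIntegrable (by fun_prop) _ _) fun s hs => ?_
          have hs' : s ∈ Icc a b := ⟨hs.1, hs.2.trans t.2.2⟩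
          simpa [IccExtend_of_mem hab _ hs', mul_pow] using ih ⟨s, hs'⟩
      _ = (K * (t - a)) ^ (n + 1) / (n + 1).factorial * dist ψ χ := by
          rw [hint, mul_pow]; ring

theorem exists_isFixedPt_of_dist_le_integral [CompleteSpace E] (hS : IsClosed S) [Nonempty S]
    (hK : 0 ≤ K)
    (hT : ∀ ψ χ : S, ∀ t : Icc a b, dist ((T ψ).1 t) ((T χ).1 t) ≤
      K * ∫ s in a..t, dist (IccExtend hab ψ.1 s) (IccExtend hab χ.1 s)) :
    ∃ ψ, IsFixedPt T ψ := by
  have : CompleteSpace S := hS.completeSpace_coe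
  have hba : 0 ≤ b - a := sub_nonneg.2 hab
  have hiter (n : ℕ) (ψ χ : S) :
      dist (T^[n] ψ) (T^[n] χ) ≤ (K * (b - a)) ^ n / n.factorial * dist ψ χ := by
    rw [Subtype.dist_eq, ContinuousMap.dist_le (by positivity)]
    refine fun t => (dist_iterate_apply_le_of_dist_le_integral hab hK hT n ψ χ t).trans ?_
    have : 0 ≤ t - a := sub_nonneg.2 t.2.1
    gcongr
    exact t.2.2
  obtain ⟨n, hn⟩ := (FloorSemiring.tendsto_pow_div_factorial_atTop (K * (b - a))).eventually
    (gt_mem_nhds one_pos) |>.exists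
  have hC : ContractingWith ⟨(K * (b - a)) ^ n / n.factorial, by positivity⟩ T^[n] :=
    ⟨hn, LipschitzWith.of_dist_le_mul (hiter n)⟩
  exact ⟨_, hC.isFixedPt_fixedPoint_iterate⟩

end VolterraFixedPoint

section Tube

variable {F X : Type*} [SeminormedAddCommGroup F] [PseudoMetricSpace X]

def tube (φ : X → F) (R : X → ℝ) (I : Set X) : Set (F × X) :=
  {p | p.2 ∈ I ∧ ‖p.1 - φ p.2‖ ≤ R p.2}

variable {φ : X → F} {R : X → ℝ} {I : Set X}

theorem isClosed_tube (hI : IsClosed I) (hφ : ContinuousOn φ I) (hR : ContinuousOn R I) :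
    IsClosed (tube φ R I) :=
  (hI.preimage continuous_snd).isClosed_le
    (continuous_fst.continuousOn.sub (hφ.comp continuous_snd.continuousOn fun _ h => h)).norm
    (hR.comp continuous_snd.continuousOn fun _ h => h)

theorem isBounded_tube (hI : IsCompact I) (hφ : ContinuousOn φ I) (hR : ContinuousOn R I) :
    IsBounded (tube φ R I) := by
  obtain ⟨r₁, hr₁⟩ := hI.exists_bound_of_continuousOn hφ
  obtain ⟨r₂, hr₂⟩ := hI.exists_bound_of_continuousOn hR
  refine ((Metric.isBounded_closedBall (x := (0 : F)) (r := r₂ + r₁)).prod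
    hI.isBounded).subset fun ⟨f, x⟩ ⟨hx, hf⟩ => ⟨?_, hx⟩
  rw [mem_closedBall_zero_iff]
  calc ‖f‖ ≤ ‖f - φ x‖ + ‖φ x‖ := norm_le_norm_sub_add f (φ x)
    _ ≤ r₂ + r₁ := add_le_add (hf.trans ((le_abs_self _).trans (hr₂ x hx))) (hr₁ x hx)

end Tube

section Duhamel

variable {F : Type*} [NormedAddCommGroup F] [NormedSpace ℝ F] {𝒰 : ℝ → F →L[ℝ] F} {u : ℝ → ℝ}
  {P : F → ℝ → F} {f₀ : F} {t₀ t₁ t : ℝ} {φ χ : ℝ → F} {g : ℝ → F}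

noncomputable def duhamel (𝒰 : ℝ → F →L[ℝ] F) (P : F → ℝ → F) (f₀ : F) (t₀ : ℝ) (φ : ℝ → F)
    (t : ℝ) : F :=
  𝒰 (t - t₀) f₀ + ∫ s in t₀..t, 𝒰 (t - s) (P (φ s) s)

variable (hU : ContinuousOn (fun p : ℝ × F => 𝒰 p.1 p.2) (Ici 0 ×ˢ univ))
include hU

theorem intervalIntegrable_apply_sub (hts : t₀ ≤ t) (hg : ContinuousOn g (Icc t₀ t)) :
    IntervalIntegrable (fun s => 𝒰 (t - s) (g s)) volume t₀ t :=
  (hU.comp ((continuousOn_const.sub continuousOn_id).prodMk hg) fun _ hs =>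
    ⟨sub_nonneg.2 hs.2, mem_univ _⟩).intervalIntegrable_of_Icc hts

theorem continuousOn_integral_apply_sub (h : t₀ ≤ t₁) (hg : ContinuousOn g (Icc t₀ t₁)) :
    ContinuousOn (fun t => ∫ s in t₀..t, 𝒰 (t - s) (g s)) (Icc t₀ t₁) := by
  set g' := IccExtend h ((Icc t₀ t₁).domRestrict g)
  have hg' : Continuous g' := hg.domRestrict.Icc_extend'
  have hcont : Continuous (uncurry fun t s => 𝒰 (max (t - s) 0) (g' s)) :=
    hU.comp_continuous (f := fun p : ℝ × ℝ => (max (p.1 - p.2) 0, g' p.2)) (by fun_prop)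
      fun p => ⟨le_max_right (p.1 - p.2) 0, mem_univ _⟩
  refine (intervalIntegral.continuous_parametric_intervalIntegral_of_continuous hcont
    continuous_id).continuousOn.congr fun t ht => intervalIntegral.integral_congr fun s hs => ?_
  rw [uIcc_of_le ht.1] at hs
  simp [g', IccExtend_of_mem h _ ⟨hs.1, hs.2.trans ht.2⟩, max_eq_left (sub_nonneg.2 hs.2)]

theorem continuousOn_duhamel (h𝒰c : ContinuousOn (fun r => 𝒰 r f₀) (Ici 0)) (h : t₀ ≤ t₁)
    (hφ : ContinuousOn (fun s => P (φ s) s) (Icc t₀ t₁)) :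
    ContinuousOn (duhamel 𝒰 P f₀ t₀ φ) (Icc t₀ t₁) :=
  (h𝒰c.comp (continuousOn_id.sub continuousOn_const) fun _ ht => sub_nonneg.2 ht.1).add
    (continuousOn_integral_apply_sub hU h hφ)

theorem duhamel_sub_duhamel (hts : t₀ ≤ t) (hφ : ContinuousOn (fun s => P (φ s) s) (Icc t₀ t))
    (hχ : ContinuousOn (fun s => P (χ s) s) (Icc t₀ t)) :
    duhamel 𝒰 P f₀ t₀ φ t - duhamel 𝒰 P f₀ t₀ χ t =
      ∫ s in t₀..t, 𝒰 (t - s) (P (φ s) s - P (χ s) s) := by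
  simp only [duhamel, map_sub]
  rw [intervalIntegral.integral_sub (intervalIntegrable_apply_sub hU hts hφ)
    (intervalIntegrable_apply_sub hU hts hχ)]
  abel

theorem norm_duhamel_sub_le (hu : ∀ r, 0 ≤ r → ∀ f, ‖𝒰 r f‖ ≤ u r * ‖f‖) (hts : t₀ ≤ t)
    (hφ : ContinuousOn (fun s => P (φ s) s) (Icc t₀ t))
    (hχ : ContinuousOn (fun s => P (χ s) s) (Icc t₀ t)) {v : ℝ → ℝ}
    (hv : IntervalIntegrable v volume t₀ t)
    (hPv : ∀ s ∈ Icc t₀ t, u (t - s) * ‖P (φ s) s - P (χ s) s‖ ≤ v s) :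
    ‖duhamel 𝒰 P f₀ t₀ φ t - duhamel 𝒰 P f₀ t₀ χ t‖ ≤ ∫ s in t₀..t, v s := by
  rw [duhamel_sub_duhamel hU hts hφ hχ]
  exact intervalIntegral.norm_integral_le_of_norm_le hts (.of_forall fun s hs =>
    (hu _ (sub_nonneg.2 hs.2) _).trans (hPv s (Ioc_subset_Icc_self hs))) hv

theorem norm_duhamel_sub_le_of_control (hu_cont : ContinuousOn u (Ici 0))
    (hu : ∀ r, 0 ≤ r → ∀ f, ‖𝒰 r f‖ ≤ u r * ‖f‖) (hu0 : ∀ r, 0 ≤ r → 0 ≤ u r)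
    (hφ : ContinuousOn (fun s => P (φ s) s) (Icc t₀ t₁))
    (hχ : ContinuousOn (fun s => P (χ s) s) (Icc t₀ t₁)) {w : ℝ → ℝ}
    (hw : ContinuousOn w (Icc t₀ t₁)) (hPw : ∀ s ∈ Icc t₀ t₁, ‖P (φ s) s - P (χ s) s‖ ≤ w s)
    {e r : ℝ → ℝ} (he : ∀ t ∈ Icc t₀ t₁, ‖χ t - duhamel 𝒰 P f₀ t₀ χ t‖ ≤ e t)
    (her : ∀ t ∈ Icc t₀ t₁, e t + ∫ s in t₀..t, u (t - s) * w s ≤ r t) :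
    ∀ t ∈ Icc t₀ t₁, ‖duhamel 𝒰 P f₀ t₀ φ t - χ t‖ ≤ r t := by
  intro t ht
  have hsub : Icc t₀ t ⊆ Icc t₀ t₁ := Icc_subset_Icc_right ht.2
  have hv : IntervalIntegrable (fun s => u (t - s) * w s) volume t₀ t :=
    ((hu_cont.comp (continuousOn_const.sub continuousOn_id) fun _ hs => sub_nonneg.2 hs.2).mul
      (hw.mono hsub)).intervalIntegrable_of_Icc ht.1
  have hdiff := norm_duhamel_sub_le (f₀ := f₀) hU hu ht.1 (hφ.mono hsub) (hχ.mono hsub) hv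
    fun s hs => mul_le_mul_of_nonneg_left (hPw s (hsub hs)) (hu0 _ (sub_nonneg.2 hs.2))
  calc _ ≤ ‖duhamel 𝒰 P f₀ t₀ φ t - duhamel 𝒰 P f₀ t₀ χ t‖ + ‖χ t - duhamel 𝒰 P f₀ t₀ χ t‖ := by
        rw [norm_sub_rev (χ t)]
        exact norm_sub_le_norm_sub_add_norm_sub _ _ _
    _ ≤ r t := by linarith [hdiff, he t ht, her t ht]

theorem exists_eq_duhamel_of_lipschitzOn_tube [CompleteSpace F]
    (h𝒰c : ContinuousOn (fun r => 𝒰 r f₀) (Ici 0)) (hu : ∀ r, 0 ≤ r → ∀ f, ‖𝒰 r f‖ ≤ u r * ‖f‖)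
    (hu0 : ∀ r, 0 ≤ r → 0 ≤ u r) (h : t₀ ≤ t₁) {φap : ℝ → F} {R : ℝ → ℝ}
    (hφap : ContinuousOn φap (Icc t₀ t₁)) (hRnn : ∀ t ∈ Icc t₀ t₁, 0 ≤ R t) {M L : ℝ}
    (hM : ∀ r ∈ Icc 0 (t₁ - t₀), u r ≤ M) (hL0 : 0 ≤ L)
    (hPc : ContinuousOn (fun q : F × ℝ => P q.1 q.2) (tube φap R (Icc t₀ t₁)))
    (hPL : ∀ f f' t, (f, t) ∈ tube φap R (Icc t₀ t₁) → (f', t) ∈ tube φap R (Icc t₀ t₁) →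
      ‖P f t - P f' t‖ ≤ L * ‖f - f'‖)
    (hinv : ∀ φ : ℝ → F, ContinuousOn (fun s => P (φ s) s) (Icc t₀ t₁) →
      (∀ t ∈ Icc t₀ t₁, ‖φ t - φap t‖ ≤ R t) →
      ∀ t ∈ Icc t₀ t₁, ‖duhamel 𝒰 P f₀ t₀ φ t - φap t‖ ≤ R t) :
    ∃ φ : ℝ → F, ContinuousOn φ (Icc t₀ t₁) ∧ (∀ t ∈ Icc t₀ t₁, ‖φ t - φap t‖ ≤ R t) ∧
      ∀ t ∈ Icc t₀ t₁, φ t = duhamel 𝒰 P f₀ t₀ φ t := by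
  set S : Set C(Icc t₀ t₁, F) := {ψ | ∀ t, ‖ψ t - φap t‖ ≤ R t}
  have hS : IsClosed S := by
    simp only [S, ofPred_forall]
    exact isClosed_iInter fun t =>
      isClosed_le ((continuous_eval_const t).sub continuous_const).norm continuous_const
  have : Nonempty S := ⟨⟨⟨_, hφap.domRestrict⟩, fun t => by simpa using hRnn t t.2⟩⟩
  have hext (ψ : S) : ∀ t ∈ Icc t₀ t₁, ‖IccExtend h ψ.1 t - φap t‖ ≤ R t := fun t ht => by
    simpa [IccExtend_of_mem h _ ht] using ψ.2 ⟨t, ht⟩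
  have hPψ (ψ : S) : ContinuousOn (fun s => P (IccExtend h ψ.1 s) s) (Icc t₀ t₁) :=
    hPc.comp (ψ.1.continuous.Icc_extend'.continuousOn.prodMk continuousOn_id)
      fun s hs => ⟨hs, hext ψ s hs⟩
  let T : S → S := fun ψ =>
    ⟨⟨(Icc t₀ t₁).domRestrict (duhamel 𝒰 P f₀ t₀ (IccExtend h ψ.1)),
      (continuousOn_duhamel hU h𝒰c h (hPψ ψ)).domRestrict⟩, fun t => hinv _ (hPψ ψ) (hext ψ) t t.2⟩
  have hM0 : 0 ≤ M := (hu0 0 le_rfl).trans (hM 0 ⟨le_rfl, sub_nonneg.2 h⟩)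
  have hT (ψ χ : S) (t : Icc t₀ t₁) : dist ((T ψ).1 t) ((T χ).1 t) ≤
      M * L * ∫ s in t₀..t, dist (IccExtend h ψ.1 s) (IccExtend h χ.1 s) := by
    have hsub : Icc t₀ t ⊆ Icc t₀ t₁ := Icc_subset_Icc_right t.2.2
    simp only [dist_eq_norm, ← intervalIntegral.integral_const_mul]
    refine norm_duhamel_sub_le hU hu t.2.1 ((hPψ ψ).mono hsub) ((hPψ χ).mono hsub)
      (Continuous.intervalIntegrable (by fun_prop) _ _) fun s hs => ?_
    have hs' := hsub hs
    calc _ ≤ M * (L * ‖IccExtend h ψ.1 s - IccExtend h χ.1 s‖) :=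
          mul_le_mul (hM _ ⟨sub_nonneg.2 hs.2, by linarith [hs.1, t.2.2]⟩)
            (hPL _ _ s ⟨hs', hext ψ s hs'⟩ ⟨hs', hext χ s hs'⟩) (norm_nonneg _) hM0
      _ = _ := by ring
  obtain ⟨ψ, hψ⟩ := exists_isFixedPt_of_dist_le_integral h hS (mul_nonneg hM0 hL0) hT
  refine ⟨IccExtend h ψ.1, ψ.1.continuous.Icc_extend'.continuousOn, hext ψ, fun t ht => ?_⟩
  conv_lhs => rw [← hψ]
  simp [T, IccExtend_of_mem h _ ht]

end Duhamel

theorem stmt_10_general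
    {F : Type*} [NormedAddCommGroup F] [NormedSpace ℝ F] [CompleteSpace F]
    (𝒰 : ℝ → F →L[ℝ] F)
    (h𝒰c : ∀ f : F, ContinuousOn (fun t => 𝒰 t f) (Ici (0 : ℝ)))
    (u : ℝ → ℝ) (hu_cont : ContinuousOn u (Ici (0 : ℝ)))
    (hu : ∀ t : ℝ, 0 ≤ t → ∀ f : F, ‖𝒰 t f‖ ≤ u t * ‖f‖)
    (P : F → ℝ → F) (D : Set (F × ℝ))
    (hPc : ContinuousOn (fun q : F × ℝ => P q.1 q.2) D)
    (hPlip : ∀ C : Set (F × ℝ), IsBounded C → closure C ⊆ D →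
      ∃ L : ℝ, 0 ≤ L ∧ ∀ (f f' : F) (t : ℝ), (f, t) ∈ C → (f', t) ∈ C →
        ‖P f t - P f' t‖ ≤ L * ‖f - f'‖)
    (f₀ : F) (t₀ t₁ : ℝ) (h01 : t₀ < t₁)
    -- the approximate solution and its integral error estimator
    (φap : ℝ → F) (hφapc : ContinuousOn φap (Icc t₀ t₁))
    (hφapD : ∀ t ∈ Icc t₀ t₁, (φap t, t) ∈ D)
    (ℰ : ℝ → ℝ)
    (hℰ : ∀ t ∈ Icc t₀ t₁,
      ‖φap t - 𝒰 (t - t₀) f₀ - ∫ s in t₀..t, 𝒰 (t - s) (P (φap s) s)‖ ≤ ℰ t)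
    -- the growth estimator `ℓ` of `P` from `φap` on the tube of radius `ρ ∈ (0,∞]`
    (ρ : ℝ≥0∞) (ℓ : ℝ → ℝ → ℝ)
    (hℓc : ContinuousOn (fun q : ℝ × ℝ => ℓ q.1 q.2)
      {q : ℝ × ℝ | 0 ≤ q.1 ∧ ENNReal.ofReal q.1 < ρ ∧ q.2 ∈ Icc t₀ t₁})
    (hℓmono : ∀ t ∈ Icc t₀ t₁, ∀ r r' : ℝ, 0 ≤ r → r ≤ r' → ENNReal.ofReal r' < ρ →
      ℓ r t ≤ ℓ r' t)
    (htube : ∀ (f : F), ∀ t ∈ Icc t₀ t₁, (‖f - φap t‖₊ : ℝ≥0∞) < ρ →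
      (f, t) ∈ D ∧ ‖P f t - P (φap t) t‖ ≤ ℓ (‖f - φap t‖) t)
    -- the control inequality
    (R : ℝ → ℝ) (hRc : ContinuousOn R (Icc t₀ t₁))
    (hRnn : ∀ t ∈ Icc t₀ t₁, 0 ≤ R t) (hRρ : ∀ t ∈ Icc t₀ t₁, ENNReal.ofReal (R t) < ρ)
    (hcontrol : ∀ t ∈ Icc t₀ t₁,
      ℰ t + ∫ s in t₀..t, u (t - s) * ℓ (R s) s ≤ R t) :
    ∃ φ : ℝ → F, ContinuousOn φ (Icc t₀ t₁) ∧
      (∀ t ∈ Icc t₀ t₁, (φ t, t) ∈ D) ∧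
      (∀ t ∈ Icc t₀ t₁,
        φ t = 𝒰 (t - t₀) f₀ + ∫ s in t₀..t, 𝒰 (t - s) (P (φ s) s)) ∧
      (∀ t ∈ Icc t₀ t₁, ‖φ t - φap t‖ ≤ R t) := by
  -- `u ≥ 0` is only forced when `F` has a nonzero vector.
  rcases subsingleton_or_nontrivial F with _ | _
  · exact ⟨φap, hφapc, hφapD, fun _ _ => Subsingleton.elim _ _,
      fun t ht => by simpa using hRnn t ht⟩
  have hu0 (r : ℝ) (hr : 0 ≤ r) : 0 ≤ u r := nonneg_of_norm_le_mul_norm (hu r hr)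
  have hPℓ : ∀ f, ∀ s ∈ Icc t₀ t₁, ‖f - φap s‖ ≤ R s →
      (f, s) ∈ D ∧ ‖P f s - P (φap s) s‖ ≤ ℓ (R s) s := by
    intro f s hs hf
    have hfρ : (‖f - φap s‖₊ : ℝ≥0∞) < ρ := by
      rw [← enorm_eq_nnnorm, ← ofReal_norm]
      exact (ENNReal.ofReal_le_ofReal hf).trans_lt (hRρ s hs)
    obtain ⟨hfD, hPf⟩ := htube f s hs hfρ
    exact ⟨hfD, hPf.trans (hℓmono s hs _ _ (norm_nonneg _) hf (hRρ s hs))⟩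
  have hCD : tube φap R (Icc t₀ t₁) ⊆ D := fun p hp => (hPℓ p.1 p.2 hp.1 hp.2).1
  obtain ⟨L, hL0, hL⟩ := hPlip _ (isBounded_tube isCompact_Icc hφapc hRc)
    (by rwa [(isClosed_tube isClosed_Icc hφapc hRc).closure_eq])
  obtain ⟨M, hM⟩ := isCompact_Icc.exists_bound_of_continuousOn
    (hu_cont.mono fun r (hr : r ∈ Icc 0 (t₁ - t₀)) => hr.1)
  have hU := hu_cont.clm_apply_of_norm_le hu h𝒰c
  have hPap : ContinuousOn (fun s => P (φap s) s) (Icc t₀ t₁) :=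
    hPc.comp (hφapc.prodMk continuousOn_id) hφapD
  have hℓR : ContinuousOn (fun s => ℓ (R s) s) (Icc t₀ t₁) :=
    hℓc.comp (hRc.prodMk continuousOn_id) fun s hs => ⟨hRnn s hs, hRρ s hs, hs⟩
  obtain ⟨φ, hφc, hφR, hφeq⟩ := exists_eq_duhamel_of_lipschitzOn_tube hU (h𝒰c f₀) hu hu0 h01.le
    hφapc hRnn (fun r hr => (le_abs_self _).trans (hM r hr)) hL0 (hPc.mono hCD) hL
    fun φ hPφ hφR => norm_duhamel_sub_le_of_control hU hu_cont hu hu0 hPφ hPap hℓR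
      (fun s hs => (hPℓ _ s hs (hφR s hs)).2)
      (fun t ht => by simpa only [duhamel, sub_sub] using hℰ t ht) hcontrol
  exact ⟨φ, hφc, fun t ht => hCD ⟨ht, hφR t ht⟩, hφeq, hφR⟩

/-- Main theorem: if the control inequality
`ℰ(t) + ∫_{t₀}^t u(t−s) ℓ(R(s),s) ds ≤ R(t)` has a solution `R` on `[t₀,t₁]`, then the
Volterra problem has a solution `φ` on `[t₀,t₁]` with `‖φ(t) − φ_ap(t)‖ ≤ R(t)`. -/
theorem stmt_10
    {F : Type*} [NormedAddCommGroup F] [NormedSpace ℝ F] [CompleteSpace F]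
    (𝒰 : ℝ → F →L[ℝ] F)
    (h𝒰sg : ∀ s t : ℝ, 0 ≤ s → 0 ≤ t → 𝒰 (s + t) = (𝒰 s).comp (𝒰 t))
    (h𝒰0 : 𝒰 0 = ContinuousLinearMap.id ℝ F)
    (h𝒰c : ∀ f : F, ContinuousOn (fun t => 𝒰 t f) (Ici (0 : ℝ)))
    (u : ℝ → ℝ) (hu_cont : ContinuousOn u (Ici (0 : ℝ)))
    (hu : ∀ t : ℝ, 0 ≤ t → ∀ f : F, ‖𝒰 t f‖ ≤ u t * ‖f‖)
    (P : F → ℝ → F) (D : Set (F × ℝ)) (hD : IsOpen D)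
    (hPc : ContinuousOn (fun q : F × ℝ => P q.1 q.2) D)
    (hPlip : ∀ C : Set (F × ℝ), IsBounded C → closure C ⊆ D →
      ∃ L : ℝ, 0 ≤ L ∧ ∀ (f f' : F) (t : ℝ), (f, t) ∈ C → (f', t) ∈ C →
        ‖P f t - P f' t‖ ≤ L * ‖f - f'‖)
    (f₀ : F) (t₀ t₁ : ℝ) (h01 : t₀ < t₁) (hf₀ : (f₀, t₀) ∈ D)
    -- the approximate solution and its integral error estimator
    (φap : ℝ → F) (hφapc : ContinuousOn φap (Icc t₀ t₁))
    (hφapD : ∀ t ∈ Icc t₀ t₁, (φap t, t) ∈ D)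
    (ℰ : ℝ → ℝ) (hℰc : ContinuousOn ℰ (Icc t₀ t₁)) (hℰnn : ∀ t ∈ Icc t₀ t₁, 0 ≤ ℰ t)
    (hℰ : ∀ t ∈ Icc t₀ t₁,
      ‖φap t - 𝒰 (t - t₀) f₀ - ∫ s in t₀..t, 𝒰 (t - s) (P (φap s) s)‖ ≤ ℰ t)
    -- the growth estimator `ℓ` of `P` from `φap` on the tube of radius `ρ ∈ (0,∞]`
    (ρ : ℝ≥0∞) (hρ : 0 < ρ) (ℓ : ℝ → ℝ → ℝ)
    (hℓc : ContinuousOn (fun q : ℝ × ℝ => ℓ q.1 q.2)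
      {q : ℝ × ℝ | 0 ≤ q.1 ∧ ENNReal.ofReal q.1 < ρ ∧ q.2 ∈ Icc t₀ t₁})
    (hℓnn : ∀ r t, 0 ≤ r → ENNReal.ofReal r < ρ → t ∈ Icc t₀ t₁ → 0 ≤ ℓ r t)
    (hℓmono : ∀ t ∈ Icc t₀ t₁, ∀ r r' : ℝ, 0 ≤ r → r ≤ r' → ENNReal.ofReal r' < ρ →
      ℓ r t ≤ ℓ r' t)
    (htube : ∀ (f : F), ∀ t ∈ Icc t₀ t₁, (‖f - φap t‖₊ : ℝ≥0∞) < ρ →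
      (f, t) ∈ D ∧ ‖P f t - P (φap t) t‖ ≤ ℓ (‖f - φap t‖) t)
    -- the control inequality
    (R : ℝ → ℝ) (hRc : ContinuousOn R (Icc t₀ t₁))
    (hRnn : ∀ t ∈ Icc t₀ t₁, 0 ≤ R t) (hRρ : ∀ t ∈ Icc t₀ t₁, ENNReal.ofReal (R t) < ρ)
    (hcontrol : ∀ t ∈ Icc t₀ t₁,
      ℰ t + ∫ s in t₀..t, u (t - s) * ℓ (R s) s ≤ R t) :
    ∃ φ : ℝ → F, ContinuousOn φ (Icc t₀ t₁) ∧
      (∀ t ∈ Icc t₀ t₁, (φ t, t) ∈ D) ∧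
      (∀ t ∈ Icc t₀ t₁,
        φ t = 𝒰 (t - t₀) f₀ + ∫ s in t₀..t, 𝒰 (t - s) (P (φ s) s)) ∧
      (∀ t ∈ Icc t₀ t₁, ‖φ t - φap t‖ ≤ R t) :=
  stmt_10_general 𝒰 h𝒰c u hu_cont hu P D hPc hPlip f₀ t₀ t₁ h01 φap hφapc hφapD ℰ hℰ ρ ℓ hℓc hℓmono
    htube R hRc hRnn hRρ hcontrol
end

section
/- Under the hypotheses of the control-inequality theorem, let 𝒟 := {ψ ∈ C([t₀,t₁],F) : ‖ψ(t) − φ_ap(t)‖ ≤ R(t) for all t} and define 𝒥(ψ)(t) := 𝒰(t−t₀)f₀ + ∫_{t₀}^t 𝒰(t−s)P(ψ(s),s) ds. Then 𝒥 maps 𝒟 into 𝒟. -/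
/-!
Subtract the integral equation that `φap` satisfies up to the error `ℰ` from the definition of
`𝒥 ψ`: the remainder is `∫_{t₀}^t 𝒰(t−s)(P(ψ s, s) − P(φap s, s)) ds` minus the defect of `φap`.
Since `ψ` stays in the tube of radius `R(s) < ρ`, the growth estimator and its monotonicity bound
the integrand by `u(t−s) ℓ(R s, s)`, so the remainder has norm at most
`∫_{t₀}^t u(t−s) ℓ(R s, s) ds + ℰ t ≤ R t` by the control inequality.
-/

open MeasureTheory Set Bornology
open scoped ENNReal

section OperatorFamily

variable {X E F : Type*} [TopologicalSpace X]
  [NormedAddCommGroup E] [NormedSpace ℝ E] [NormedAddCommGroup F] [NormedSpace ℝ F]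

lemma norm_apply_le_mul_of_norm_le [Nontrivial E] {A : E →L[ℝ] F} {c w : ℝ}
    (hA : ∀ f, ‖A f‖ ≤ c * ‖f‖) {x : E} (hx : ‖x‖ ≤ w) : ‖A x‖ ≤ c * w := by
  obtain ⟨f, hf⟩ := exists_ne (0 : E)
  have hc : 0 ≤ c := nonneg_of_mul_nonneg_left ((norm_nonneg _).trans (hA f)) (norm_pos_iff.mpr hf)
  exact (hA x).trans (mul_le_mul_of_nonneg_left hx hc)

/-- `A x (g x) = A x (g x - g x₀) + A x (g x₀)`, and the norm bound squeezes the first term to `0`. -/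
lemma ContinuousOn.clm_apply_of_norm_le_s11 {A : X → E →L[ℝ] F} {g : X → E} {c : X → ℝ} {s : Set X}
    (hA : ∀ f, ContinuousOn (fun x => A x f) s) (hc : ContinuousOn c s)
    (hAc : ∀ x ∈ s, ∀ f, ‖A x f‖ ≤ c x * ‖f‖) (hg : ContinuousOn g s) :
    ContinuousOn (fun x => A x (g x)) s := by
  intro x₀ hx₀
  have hsmall : Filter.Tendsto (fun x => A x (g x - g x₀)) (nhdsWithin x₀ s) (nhds 0) := by
    have hlim : Filter.Tendsto (fun x => c x * ‖g x - g x₀‖) (nhdsWithin x₀ s)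
        (nhds (c x₀ * ‖g x₀ - g x₀‖)) :=
      (hc x₀ hx₀).tendsto.mul ((hg x₀ hx₀).tendsto.sub tendsto_const_nhds).norm
    rw [sub_self, norm_zero, mul_zero] at hlim
    exact squeeze_zero_norm' (eventually_nhdsWithin_of_forall fun x hx => hAc x hx _) hlim
  have hsum := hsmall.add (hA (g x₀) x₀ hx₀).tendsto
  simp only [map_sub, sub_add_cancel, zero_add] at hsum
  exact hsum

lemma intervalIntegrable_apply_sub_of_norm_le {U : ℝ → E →L[ℝ] F} {u : ℝ → ℝ} {g : ℝ → E}
    {a b : ℝ} (hU : ∀ f, ContinuousOn (fun τ => U τ f) (Ici 0)) (hu : ContinuousOn u (Ici 0))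
    (hUu : ∀ τ, 0 ≤ τ → ∀ f, ‖U τ f‖ ≤ u τ * ‖f‖) (hab : a ≤ b) (hg : ContinuousOn g (Icc a b)) :
    IntervalIntegrable (fun s => U (b - s) (g s)) volume a b := by
  have hlag : MapsTo (fun s => b - s) (Icc a b) (Ici 0) := fun s hs => sub_nonneg.mpr hs.2
  exact ContinuousOn.intervalIntegrable_of_Icc hab <|
    ContinuousOn.clm_apply_of_norm_le_s11 (fun f => (hU f).comp (by fun_prop) hlag)
      (hu.comp (by fun_prop) hlag) (fun s hs => hUu _ (hlag hs)) hg

lemma norm_add_intervalIntegral_sub_le {A : ℝ → E →L[ℝ] F} {p q : ℝ → E} {a b : ℝ}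
    (hp : IntervalIntegrable (fun s => A s (p s)) volume a b)
    (hq : IntervalIntegrable (fun s => A s (q s)) volume a b) (x y : F) :
    ‖(x + ∫ s in a..b, A s (p s)) - y‖ ≤
      ‖∫ s in a..b, A s (p s - q s)‖ + ‖y - x - ∫ s in a..b, A s (q s)‖ := by
  have hsplit : (x + ∫ s in a..b, A s (p s)) - y =
      (∫ s in a..b, A s (p s - q s)) - (y - x - ∫ s in a..b, A s (q s)) := by
    simp only [map_sub, intervalIntegral.integral_sub hp hq]
    abel
  rw [hsplit]
  exact norm_sub_le _ _

end OperatorFamily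

lemma nnnorm_lt_of_norm_le_of_ofReal_lt {E : Type*} [SeminormedAddCommGroup E] {x : E} {r : ℝ}
    {ρ : ℝ≥0∞} (hx : ‖x‖ ≤ r) (hr : ENNReal.ofReal r < ρ) : (‖x‖₊ : ℝ≥0∞) < ρ := by
  calc (‖x‖₊ : ℝ≥0∞) = ENNReal.ofReal ‖x‖ := (ofReal_norm x).symm
    _ < ρ := (ENNReal.ofReal_le_ofReal hx).trans_lt hr

theorem stmt_11_general
    {F : Type*} [NormedAddCommGroup F] [NormedSpace ℝ F]
    (𝒰 : ℝ → F →L[ℝ] F)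
    (h𝒰c : ∀ f : F, ContinuousOn (fun t => 𝒰 t f) (Ici (0 : ℝ)))
    (u : ℝ → ℝ) (hu_cont : ContinuousOn u (Ici (0 : ℝ)))
    (hu : ∀ t : ℝ, 0 ≤ t → ∀ f : F, ‖𝒰 t f‖ ≤ u t * ‖f‖)
    (P : F → ℝ → F) (D : Set (F × ℝ))
    (hPc : ContinuousOn (fun q : F × ℝ => P q.1 q.2) D)
    (f₀ : F) (t₀ t₁ : ℝ)
    -- the approximate solution and its integral error estimator
    (φap : ℝ → F) (hφapc : ContinuousOn φap (Icc t₀ t₁))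
    (hφapD : ∀ t ∈ Icc t₀ t₁, (φap t, t) ∈ D)
    (ℰ : ℝ → ℝ)
    (hℰ : ∀ t ∈ Icc t₀ t₁,
      ‖φap t - 𝒰 (t - t₀) f₀ - ∫ s in t₀..t, 𝒰 (t - s) (P (φap s) s)‖ ≤ ℰ t)
    -- the growth estimator `ℓ` of `P` from `φap` on the tube of radius `ρ ∈ (0,∞]`
    (ρ : ℝ≥0∞) (ℓ : ℝ → ℝ → ℝ)
    (hℓc : ContinuousOn (fun q : ℝ × ℝ => ℓ q.1 q.2)
      {q : ℝ × ℝ | 0 ≤ q.1 ∧ ENNReal.ofReal q.1 < ρ ∧ q.2 ∈ Icc t₀ t₁})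
    (hℓmono : ∀ t ∈ Icc t₀ t₁, ∀ r r' : ℝ, 0 ≤ r → r ≤ r' → ENNReal.ofReal r' < ρ →
      ℓ r t ≤ ℓ r' t)
    (htube : ∀ (f : F), ∀ t ∈ Icc t₀ t₁, (‖f - φap t‖₊ : ℝ≥0∞) < ρ →
      (f, t) ∈ D ∧ ‖P f t - P (φap t) t‖ ≤ ℓ (‖f - φap t‖) t)
    -- the control inequality
    (R : ℝ → ℝ) (hRc : ContinuousOn R (Icc t₀ t₁))
    (hRnn : ∀ t ∈ Icc t₀ t₁, 0 ≤ R t) (hRρ : ∀ t ∈ Icc t₀ t₁, ENNReal.ofReal (R t) < ρ)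
    (hcontrol : ∀ t ∈ Icc t₀ t₁,
      ℰ t + ∫ s in t₀..t, u (t - s) * ℓ (R s) s ≤ R t) :
    ∀ ψ : ℝ → F, ContinuousOn ψ (Icc t₀ t₁) →
      (∀ t ∈ Icc t₀ t₁, ‖ψ t - φap t‖ ≤ R t) →
      ∀ t ∈ Icc t₀ t₁,
        ‖(𝒰 (t - t₀) f₀ + ∫ s in t₀..t, 𝒰 (t - s) (P (ψ s) s)) - φap t‖ ≤ R t := by
  intro ψ hψc hψR t ht
  rcases subsingleton_or_nontrivial F with _ | _
  · simpa [Subsingleton.elim _ (0 : F)] using hRnn t ht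
  have hsub : Icc t₀ t ⊆ Icc t₀ t₁ := Icc_subset_Icc_right ht.2
  have hlag : MapsTo (fun s => t - s) (Icc t₀ t) (Ici 0) := fun s hs => sub_nonneg.mpr hs.2
  have hψtube s (hs : s ∈ Icc t₀ t₁) := htube (ψ s) s hs
    (nnnorm_lt_of_norm_le_of_ofReal_lt (hψR s hs) (hRρ s hs))
  have hIψ := intervalIntegrable_apply_sub_of_norm_le h𝒰c hu_cont hu ht.1
    ((hPc.comp (hψc.prodMk continuousOn_id) fun s hs => (hψtube s hs).1).mono hsub)
  have hIφ := intervalIntegrable_apply_sub_of_norm_le h𝒰c hu_cont hu ht.1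
    ((hPc.comp (hφapc.prodMk continuousOn_id) hφapD).mono hsub)
  have hbound : IntervalIntegrable (fun s => u (t - s) * ℓ (R s) s) volume t₀ t :=
    ContinuousOn.intervalIntegrable_of_Icc ht.1 <| (hu_cont.comp (by fun_prop) hlag).mul <|
      hℓc.comp ((hRc.mono hsub).prodMk continuousOn_id)
        fun s hs => ⟨hRnn s (hsub hs), hRρ s (hsub hs), hsub hs⟩
  have hpointwise : ∀ s ∈ Ioc t₀ t,
      ‖𝒰 (t - s) (P (ψ s) s - P (φap s) s)‖ ≤ u (t - s) * ℓ (R s) s := by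
    intro s hs
    have hs' : s ∈ Icc t₀ t₁ := hsub (Ioc_subset_Icc_self hs)
    exact norm_apply_le_mul_of_norm_le (hu _ (sub_nonneg.mpr hs.2)) <| (hψtube s hs').2.trans <|
      hℓmono s hs' _ _ (norm_nonneg _) (hψR s hs') (hRρ s hs')
  calc _ ≤ ‖∫ s in t₀..t, 𝒰 (t - s) (P (ψ s) s - P (φap s) s)‖
        + ‖φap t - 𝒰 (t - t₀) f₀ - ∫ s in t₀..t, 𝒰 (t - s) (P (φap s) s)‖ :=
        norm_add_intervalIntegral_sub_le hIψ hIφ _ _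
    _ ≤ (∫ s in t₀..t, u (t - s) * ℓ (R s) s) + ℰ t :=
        add_le_add (intervalIntegral.norm_integral_le_of_norm_le ht.1
          (Filter.Eventually.of_forall hpointwise) hbound) (hℰ t ht)
    _ ≤ R t := by linarith [hcontrol t ht]

/-- Under the hypotheses of the control-inequality theorem, the Volterra operator
`𝒥(ψ)(t) := 𝒰(t−t₀)f₀ + ∫_{t₀}^t 𝒰(t−s)P(ψ(s),s) ds` maps the set
`𝒟 = {ψ : ‖ψ(t) − φ_ap(t)‖ ≤ R(t)}` into itself. -/
theorem stmt_11
    {F : Type*} [NormedAddCommGroup F] [NormedSpace ℝ F] [CompleteSpace F]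
    (𝒰 : ℝ → F →L[ℝ] F)
    (h𝒰sg : ∀ s t : ℝ, 0 ≤ s → 0 ≤ t → 𝒰 (s + t) = (𝒰 s).comp (𝒰 t))
    (h𝒰0 : 𝒰 0 = ContinuousLinearMap.id ℝ F)
    (h𝒰c : ∀ f : F, ContinuousOn (fun t => 𝒰 t f) (Ici (0 : ℝ)))
    (u : ℝ → ℝ) (hu_cont : ContinuousOn u (Ici (0 : ℝ)))
    (hu : ∀ t : ℝ, 0 ≤ t → ∀ f : F, ‖𝒰 t f‖ ≤ u t * ‖f‖)
    (P : F → ℝ → F) (D : Set (F × ℝ)) (hD : IsOpen D)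
    (hPc : ContinuousOn (fun q : F × ℝ => P q.1 q.2) D)
    (hPlip : ∀ C : Set (F × ℝ), IsBounded C → closure C ⊆ D →
      ∃ L : ℝ, 0 ≤ L ∧ ∀ (f f' : F) (t : ℝ), (f, t) ∈ C → (f', t) ∈ C →
        ‖P f t - P f' t‖ ≤ L * ‖f - f'‖)
    (f₀ : F) (t₀ t₁ : ℝ) (h01 : t₀ < t₁) (hf₀ : (f₀, t₀) ∈ D)
    -- the approximate solution and its integral error estimator
    (φap : ℝ → F) (hφapc : ContinuousOn φap (Icc t₀ t₁))
    (hφapD : ∀ t ∈ Icc t₀ t₁, (φap t, t) ∈ D)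
    (ℰ : ℝ → ℝ) (hℰc : ContinuousOn ℰ (Icc t₀ t₁)) (hℰnn : ∀ t ∈ Icc t₀ t₁, 0 ≤ ℰ t)
    (hℰ : ∀ t ∈ Icc t₀ t₁,
      ‖φap t - 𝒰 (t - t₀) f₀ - ∫ s in t₀..t, 𝒰 (t - s) (P (φap s) s)‖ ≤ ℰ t)
    -- the growth estimator `ℓ` of `P` from `φap` on the tube of radius `ρ ∈ (0,∞]`
    (ρ : ℝ≥0∞) (hρ : 0 < ρ) (ℓ : ℝ → ℝ → ℝ)
    (hℓc : ContinuousOn (fun q : ℝ × ℝ => ℓ q.1 q.2)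
      {q : ℝ × ℝ | 0 ≤ q.1 ∧ ENNReal.ofReal q.1 < ρ ∧ q.2 ∈ Icc t₀ t₁})
    (hℓnn : ∀ r t, 0 ≤ r → ENNReal.ofReal r < ρ → t ∈ Icc t₀ t₁ → 0 ≤ ℓ r t)
    (hℓmono : ∀ t ∈ Icc t₀ t₁, ∀ r r' : ℝ, 0 ≤ r → r ≤ r' → ENNReal.ofReal r' < ρ →
      ℓ r t ≤ ℓ r' t)
    (htube : ∀ (f : F), ∀ t ∈ Icc t₀ t₁, (‖f - φap t‖₊ : ℝ≥0∞) < ρ →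
      (f, t) ∈ D ∧ ‖P f t - P (φap t) t‖ ≤ ℓ (‖f - φap t‖) t)
    -- the control inequality
    (R : ℝ → ℝ) (hRc : ContinuousOn R (Icc t₀ t₁))
    (hRnn : ∀ t ∈ Icc t₀ t₁, 0 ≤ R t) (hRρ : ∀ t ∈ Icc t₀ t₁, ENNReal.ofReal (R t) < ρ)
    (hcontrol : ∀ t ∈ Icc t₀ t₁,
      ℰ t + ∫ s in t₀..t, u (t - s) * ℓ (R s) s ≤ R t) :
    ∀ ψ : ℝ → F, ContinuousOn ψ (Icc t₀ t₁) →
      (∀ t ∈ Icc t₀ t₁, ‖ψ t - φap t‖ ≤ R t) →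
      ∀ t ∈ Icc t₀ t₁,
        ‖(𝒰 (t - t₀) f₀ + ∫ s in t₀..t, 𝒰 (t - s) (P (ψ s) s)) - φap t‖ ≤ R t :=
  stmt_11_general 𝒰 h𝒰c u hu_cont hu P D hPc f₀ t₀ t₁ φap hφapc hφapD ℰ hℰ ρ ℓ hℓc hℓmono htube R
    hRc hRnn hRρ hcontrol
end

section
/- Consider the first-order equation φ_t = φ_x + φ^p on ℝ with p > 1 an integer and initial datum f₀ ∈ C₀(ℝ) (continuous, vanishing at infinity). The function φ(t)(x) = f₀(x+t) / [1 − (p−1) f₀(x+t)^{p−1} t]^{1/(p−1)} is well-defined and solves the associated Volterra equation φ(t) = 𝒰(t)f₀ + ∫₀^t 𝒰(t−s) φ(s)^p ds, where (𝒰(t)f)(x) = f(x+t), for all t ∈ [0,θ) with θ := sup{ t > 0 : (p−1) sup_x f₀(x)^{p−1} · t < 1 }. -/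
/-!
Along the characteristic through `x + t` the translation semigroup freezes the datum at
`a = f₀ (x + t)`, so the integrand `(𝒰(t - s) φ(s)^p)(x)` is `ψ(s)^p` for the explicit
solution `ψ(s) = a (1 - (p - 1) a^{p-1} s)^{-1/(p-1)}` of the Bernoulli equation `ψ' = ψ^p`,
`ψ(0) = a`. The Volterra identity is then the fundamental theorem of calculus for `ψ` on
`[0, t]`, on which the base `1 - (p - 1) a^{p-1} s` stays positive.
-/

open Real Filter Set

noncomputable def blowupSolution (p : ℕ) (a s : ℝ) : ℝ :=
  a / (1 - (p - 1 : ℝ) * a ^ (p - 1) * s) ^ ((1 : ℝ) / (p - 1))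

@[simp]
theorem blowupSolution_zero (p : ℕ) (a : ℝ) : blowupSolution p a 0 = a := by
  simp [blowupSolution]

section
variable {p : ℕ} {a s t : ℝ}

theorem hasDerivAt_blowupSolution (hp : 2 ≤ p)
    (hs : 0 < 1 - (p - 1 : ℝ) * a ^ (p - 1) * s) :
    HasDerivAt (blowupSolution p a) (blowupSolution p a s ^ p) s := by
  unfold blowupSolution
  set q : ℝ := p - 1 with hq_def
  set c : ℝ := q * a ^ (p - 1) with hc_def
  have hq : 0 < q := by
    have : (2 : ℝ) ≤ p := by exact_mod_cast hp
    linarith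
  have hu : HasDerivAt (fun s : ℝ => 1 - c * s) (-c) s := by
    simpa using ((hasDerivAt_id s).const_mul c).const_sub 1
  have heq : (fun s => a * (1 - c * s) ^ (-(1 / q))) =ᶠ[nhds s]
      fun s => a / (1 - c * s) ^ (1 / q) := by
    filter_upwards [hu.continuousAt.eventually (lt_mem_nhds hs)] with r hr
    rw [rpow_neg hr.le, div_eq_mul_inv a]
  -- near `s`, `ψ = a u^{-1/q}` with `u = 1 - c s`, whose derivative `a (c / q) u^{-p/q}` is `ψ^p`
  refine (((hu.rpow_const (Or.inl hs.ne')).const_mul a).congr_of_eventuallyEq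
    heq.symm).congr_deriv ?_
  have hexp : -(1 / q) - 1 = -(1 / q) * p := by
    rw [show (p : ℝ) = q + 1 by ring]; field_simp; ring
  have hpow : a * a ^ (p - 1) = a ^ p := by
    rw [← pow_succ']; congr 1; omega
  rw [div_eq_mul_inv a, ← rpow_neg hs.le, mul_pow,
    ← rpow_natCast ((1 - c * s) ^ (-(1 / q))), ← rpow_mul hs.le, hexp, ← hpow, hc_def]
  field_simp

theorem integral_blowupSolution_pow (hp : 2 ≤ p) (ht : 0 ≤ t)
    (hpos : 0 < 1 - (p - 1 : ℝ) * a ^ (p - 1) * t) :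
    ∫ s in (0 : ℝ)..t, blowupSolution p a s ^ p = blowupSolution p a t - a := by
  have hderiv : ∀ s ∈ uIcc 0 t,
      HasDerivAt (blowupSolution p a) (blowupSolution p a s ^ p) s := by
    intro s hs
    rw [uIcc_of_le ht] at hs
    refine hasDerivAt_blowupSolution hp ?_
    -- `1 - c s` is affine in `s` and positive at both ends of `[0, t]`
    rcases le_total 0 ((p - 1 : ℝ) * a ^ (p - 1)) with hc | hc <;> nlinarith [hs.1, hs.2]
  have hint : IntervalIntegrable (fun s => blowupSolution p a s ^ p) MeasureTheory.volume 0 t :=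
    ContinuousOn.intervalIntegrable fun s hs =>
      ((hderiv s hs).continuousAt.pow p).continuousWithinAt
  rw [intervalIntegral.integral_eq_sub_of_hasDerivAt hderiv hint, blowupSolution_zero]

end

theorem stmt_13_general (p : ℕ) (hp : 2 ≤ p) (f₀ : ℝ → ℝ) :
    ∀ t : ℝ, 0 ≤ t → (∀ x : ℝ, (p - 1 : ℝ) * f₀ x ^ (p - 1) * t < 1) →
      -- well-definedness: the denominator is strictly positive
      (∀ x : ℝ, 0 < 1 - (p - 1 : ℝ) * f₀ (x + t) ^ (p - 1) * t) ∧
      -- the Volterra equation, evaluated pointwise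
      (∀ x : ℝ,
        f₀ (x + t) / (1 - (p - 1 : ℝ) * f₀ (x + t) ^ (p - 1) * t) ^ ((1 : ℝ) / (p - 1)) =
          f₀ (x + t) + ∫ s in (0 : ℝ)..t,
            (f₀ (x + t) /
              (1 - (p - 1 : ℝ) * f₀ (x + t) ^ (p - 1) * s) ^ ((1 : ℝ) / (p - 1))) ^ p) := by
  intro t ht hlt
  have hpos : ∀ x, 0 < 1 - (p - 1 : ℝ) * f₀ (x + t) ^ (p - 1) * t := fun x =>
    sub_pos.mpr (hlt (x + t))
  refine ⟨hpos, fun x => ?_⟩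
  have h := integral_blowupSolution_pow hp ht (hpos x)
  simp only [blowupSolution] at h
  rw [h]
  ring

/-- For the equation `φ_t = φ_x + φ^p` on `ℝ` with datum `f₀ ∈ C₀(ℝ)`, the explicit
function `φ(t)(x) = f₀(x+t)/[1 − (p−1) f₀(x+t)^{p−1} t]^{1/(p−1)}` is well defined and
solves the Volterra equation `φ(t) = 𝒰(t)f₀ + ∫₀^t 𝒰(t−s)φ(s)^p ds` (with the translation
semigroup `(𝒰(t)f)(x) = f(x+t)`, written pointwise) for `t ∈ [0, θ)`,
`θ = sup{t > 0 : (p−1) sup_x f₀(x)^{p−1} t < 1}`. -/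
theorem stmt_13 (p : ℕ) (hp : 2 ≤ p) (f₀ : ℝ → ℝ)
    (hf₀c : Continuous f₀) (hf₀0 : Tendsto f₀ (cocompact ℝ) (nhds 0)) :
    ∀ t : ℝ, 0 ≤ t → (∀ x : ℝ, (p - 1 : ℝ) * f₀ x ^ (p - 1) * t < 1) →
      -- well-definedness: the denominator is strictly positive
      (∀ x : ℝ, 0 < 1 - (p - 1 : ℝ) * f₀ (x + t) ^ (p - 1) * t) ∧
      -- the Volterra equation, evaluated pointwise
      (∀ x : ℝ,
        f₀ (x + t) / (1 - (p - 1 : ℝ) * f₀ (x + t) ^ (p - 1) * t) ^ ((1 : ℝ) / (p - 1)) =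
          f₀ (x + t) + ∫ s in (0 : ℝ)..t,
            (f₀ (x + t) /
              (1 - (p - 1 : ℝ) * f₀ (x + t) ^ (p - 1) * s) ^ ((1 : ℝ) / (p - 1))) ^ p) :=
  stmt_13_general p hp f₀
end

section
/- Let Q : [0,θ) → ℝ be continuous and nonnegative with Q(t) ≥ e^{−t} Q₀ + ∫₀^t e^{−(t−s)} Q(s)^p ds for all t ∈ [0,θ), where Q₀ > 1 and p > 1 is an integer. Then θ ≤ −(1/(p−1)) log(1 − 1/Q₀^{p−1}). -/
/-!
With `F(t) = Q₀ + ∫₀^t e^s Q(s)^p ds` the hypothesis reads `e^{-t} F(t) ≤ Q(t)`, so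
`F' = e^t Q^p ≥ e^{-(p-1)t} F^p`: `F` is a supersolution of a Bernoulli equation. The substitution
`F ↦ F^{1-p}` linearises it, making `F(t)^{1-p} - e^{-(p-1)t}` antitone. Since its first term stays
positive, `e^{-(p-1)t} > 1 - Q₀^{1-p}` for every `t ∈ [0, θ)`, which is the bound.
-/

open Real Set

theorem intervalIntegral.hasDerivAt_integral_of_continuousOn_Icc {f : ℝ → ℝ} {a b x : ℝ}
    (hf : ContinuousOn f (Icc a b)) (hx : x ∈ Ioo a b) :
    HasDerivAt (fun y => ∫ s in a..y, f s) (f x) x :=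
  intervalIntegral.integral_hasDerivAt_right
    ((hf.mono (Icc_subset_Icc_right hx.2.le)).intervalIntegrable_of_Icc hx.1.le)
    ((hf.mono Ioo_subset_Icc_self).stronglyMeasurableAtFilter isOpen_Ioo x hx)
    (hf.continuousAt (Icc_mem_nhds hx.1 hx.2))

theorem intervalIntegral.integral_exp_neg_sub_mul (g : ℝ → ℝ) (a t : ℝ) :
    ∫ s in a..t, exp (-(t - s)) * g s = exp (-t) * ∫ s in a..t, exp s * g s := by
  rw [← intervalIntegral.integral_const_mul]
  congr 1 with s
  rw [neg_sub, sub_eq_neg_add, exp_add, mul_assoc]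

/- `(F ^ (-a))' = -a F' F ^ (-a - 1) ≤ -a e^{-ax} = (e^{-ax})'`. -/
theorem antitoneOn_rpow_neg_sub_exp {D : Set ℝ} (hD : Convex ℝ D) {a : ℝ} (ha : 0 ≤ a)
    {F F' : ℝ → ℝ} (hFc : ContinuousOn F D) (hF : ∀ x ∈ interior D, HasDerivAt F (F' x) x)
    (hFpos : ∀ x ∈ D, 0 < F x)
    (hF' : ∀ x ∈ interior D, exp (-a * x) * F x ^ (a + 1) ≤ F' x) :
    AntitoneOn (fun x => F x ^ (-a) - exp (-a * x)) D := by
  refine antitoneOn_of_hasDerivWithinAt_nonpos hD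
    ((hFc.rpow_const fun x hx => .inl (hFpos x hx).ne').sub (by fun_prop))
    (fun x hx => ((((hF x hx).rpow_const (.inl (hFpos x (interior_subset hx)).ne')).sub
      ((hasDerivAt_id x).const_mul (-a)).exp)).hasDerivWithinAt) fun x hx => ?_
  have hFx := hFpos x (interior_subset hx)
  have hexp : exp (-a * x) ≤ F' x * F x ^ (-a - 1) := by
    calc exp (-a * x) = exp (-a * x) * F x ^ (a + 1) * F x ^ (-a - 1) := by
          rw [mul_assoc, ← rpow_add hFx]; norm_num
      _ ≤ F' x * F x ^ (-a - 1) := by gcongr; exact hF' x hx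
  simp only [id, mul_one]
  nlinarith

theorem lt_of_bernoulli_supersolution {a t : ℝ} (ha : 0 < a) (ht : 0 ≤ t) {F F' : ℝ → ℝ}
    (hFc : ContinuousOn F (Icc 0 t)) (hF : ∀ x ∈ Ioo 0 t, HasDerivAt F (F' x) x)
    (hFpos : ∀ x ∈ Icc 0 t, 0 < F x)
    (hF' : ∀ x ∈ Ioo 0 t, exp (-a * x) * F x ^ (a + 1) ≤ F' x) (hF0 : 1 < F 0) :
    t < -(1 / a) * log (1 - F 0 ^ (-a)) := by
  have hanti := antitoneOn_rpow_neg_sub_exp (convex_Icc 0 t) ha.le hFc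
    (by rwa [interior_Icc]) hFpos (by rwa [interior_Icc])
  have hGt : F t ^ (-a) - exp (-a * t) ≤ F 0 ^ (-a) - 1 := by
    simpa using hanti (left_mem_Icc.2 ht) (right_mem_Icc.2 ht) ht
  have hFt : 0 < F t ^ (-a) := rpow_pos_of_pos (hFpos t (right_mem_Icc.2 ht)) _
  have hF0a : F 0 ^ (-a) < 1 := rpow_lt_one_of_one_lt_of_neg hF0 (neg_lt_zero.2 ha)
  have hlog : log (1 - F 0 ^ (-a)) < -a * t :=
    (log_lt_iff_lt_exp (by linarith)).2 (by linarith)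
  rw [show -(1 / a) * log (1 - F 0 ^ (-a)) = -log (1 - F 0 ^ (-a)) / a by ring, lt_div_iff₀ ha]
  linarith

theorem exp_neg_sub_one_mul_mul_rpow_le {p x F q : ℝ} (hp : 0 ≤ p) (hF : 0 ≤ F)
    (h : exp (-x) * F ≤ q) :
    exp (-(p - 1) * x) * F ^ p ≤ exp x * q ^ p := by
  calc exp (-(p - 1) * x) * F ^ p = exp x * (exp (-x) * F) ^ p := by
        rw [mul_rpow (exp_pos _).le hF, ← exp_mul, ← mul_assoc, ← exp_add]
        ring_nf
    _ ≤ exp x * q ^ p := by gcongr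

theorem lt_of_duhamel_supersolution {p Q₀ t : ℝ} (hp : 1 < p) (hQ₀ : 1 < Q₀) (ht : 0 ≤ t)
    {Q : ℝ → ℝ} (hQc : ContinuousOn Q (Icc 0 t)) (hQnn : ∀ x ∈ Icc 0 t, 0 ≤ Q x)
    (hQineq : ∀ x ∈ Icc 0 t, exp (-x) * Q₀ + ∫ s in 0..x, exp (-(x - s)) * Q s ^ p ≤ Q x) :
    t < -(1 / (p - 1)) * log (1 - Q₀ ^ (-(p - 1))) := by
  set F : ℝ → ℝ := fun x => Q₀ + ∫ s in 0..x, exp s * Q s ^ p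
  have hg : ContinuousOn (fun s => exp s * Q s ^ p) (Icc 0 t) :=
    continuous_exp.continuousOn.mul (hQc.rpow_const fun _ _ => .inr (by linarith))
  have hFQ₀ : ∀ x ∈ Icc 0 t, Q₀ ≤ F x := fun x hx =>
    le_add_of_nonneg_right <| intervalIntegral.integral_nonneg hx.1 fun s hs =>
      mul_nonneg (exp_pos s).le (rpow_nonneg (hQnn s ⟨hs.1, hs.2.trans hx.2⟩) p)
  have hFQ : ∀ x ∈ Icc 0 t, exp (-x) * F x ≤ Q x := fun x hx => by
    simpa only [intervalIntegral.integral_exp_neg_sub_mul, mul_add, F] using hQineq x hx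
  have hF0 : F 0 = Q₀ := by simp [F]
  rw [← hF0]
  refine lt_of_bernoulli_supersolution (by linarith) ht
    (continuousOn_const.add ?_)
    (fun x hx => (intervalIntegral.hasDerivAt_integral_of_continuousOn_Icc hg hx).const_add Q₀)
    (fun x hx => by linarith [hFQ₀ x hx]) (fun x hx => ?_) (by linarith)
  · rw [← uIcc_of_le ht]
    exact intervalIntegral.continuousOn_primitive_interval
      (by rw [uIcc_of_le ht]; exact hg.integrableOn_Icc)
  · have hx' := Ioo_subset_Icc_self hx
    rw [sub_add_cancel]
    exact exp_neg_sub_one_mul_mul_rpow_le (by linarith) (by linarith [hFQ₀ x hx']) (hFQ x hx')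

/-- Comparison lemma behind Kaplan's blow-up criterion: a continuous nonnegative `Q` with
`Q(t) ≥ e^{−t}Q₀ + ∫₀^t e^{−(t−s)} Q(s)^p ds` on `[0,θ)` and `Q₀ > 1` forces
`θ ≤ −(1/(p−1)) log(1 − 1/Q₀^{p−1})`. -/
theorem stmt_18 (p : ℕ) (hp : 2 ≤ p) (Q₀ : ℝ) (hQ₀ : 1 < Q₀)
    (θ : ℝ) (Q : ℝ → ℝ)
    (hQc : ContinuousOn Q (Ico (0 : ℝ) θ))
    (hQnn : ∀ t ∈ Ico (0 : ℝ) θ, 0 ≤ Q t)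
    (hQineq : ∀ t ∈ Ico (0 : ℝ) θ,
      Real.exp (-t) * Q₀ + (∫ s in (0 : ℝ)..t, Real.exp (-(t - s)) * Q s ^ p) ≤ Q t) :
    θ ≤ -(1 / (p - 1 : ℝ)) * Real.log (1 - 1 / Q₀ ^ (p - 1)) := by
  have hp' : (1 : ℝ) < p := by exact_mod_cast hp
  have hQ₀p : Q₀ ^ (-((p : ℝ) - 1)) = 1 / Q₀ ^ (p - 1) := by
    rw [rpow_neg (by linarith), ← Nat.cast_pred (by omega), rpow_natCast, one_div]
  have hlt : ∀ t ∈ Ico 0 θ, t < -(1 / (p - 1 : ℝ)) * log (1 - 1 / Q₀ ^ (p - 1)) := by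
    intro t ht
    have hsub : Icc 0 t ⊆ Ico 0 θ := Icc_subset_Ico_right ht.2
    rw [← hQ₀p]
    refine lt_of_duhamel_supersolution hp' hQ₀ ht.1 (hQc.mono hsub)
      (fun x hx => hQnn x (hsub hx)) fun x hx => ?_
    simpa only [rpow_natCast] using hQineq x (hsub hx)
  have hnonneg : 0 ≤ -(1 / (p - 1 : ℝ)) * log (1 - 1 / Q₀ ^ (p - 1)) :=
    mul_nonneg_of_nonpos_of_nonpos (neg_nonpos.2 (by bound))
      (log_nonpos (by bound) (sub_le_self _ (by positivity)))
  by_contra! h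
  exact (hlt _ ⟨hnonneg, h⟩).false
end
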